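/- arXiv:1301.2955 — 7 statements merged into one kernel-verified Lean document; each statement's English description precedes it below -/
import Mathlib

section
/- Let a, b, c be integers ≥ 2 with 1/a + 1/b + 1/c < 1, let T = T_{a,b,c} be the triangle group with generators x, y, and let ρ : T → GL(V) be a representation of T on a finite-dimensional complex vector space V. Let i* denote the dimension of the space of invariants of the dual representation of ρ on the dual space V*, and for t ∈ T let V^t denote the fixed-point space of ρ(t) in V. Then the space Z^1(T, ρ) of 1-cocycles (functions u : T → V satisfying u(gh) = u(g) + ρ(g)u(h) for all g, h ∈ T) satisfies dim Z^1(T, ρ) = 2·dim V + i* − (dim V^x + dim V^y + dim V^{xy}). -/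
/-!
A 1-cocycle `u` is the same as a splitting `g ↦ (u g, g)` of `V ⋊ T → T`, so by the
presentation it is determined by `v = u x` and `w = u y`, subject to the three relators being
sent to `1`. In `V ⋊ T` one has `(v, g) ^ n = (N v, g ^ n)` with `N = ∑_{i<n} ρ(g)^i`, whose
image lies in `V^g` when `g ^ n = 1`. Hence `Z¹ ≅ ker Φ` for
`Φ (v, w) = (N_x v, N_y w, N_{xy} (v + x w)) ∈ V^x × V^y × V^{xy}`, and rank–nullity for `Φ`
and its transpose gives `dim Z¹ = 2 dim V - (dim V^x + dim V^y + dim V^{xy}) + dim ker Φ*`.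
Since each `N` maps onto the fixed space, a functional `ψ` with `ψ ∘ Φ = 0` is determined by
`ψ ∘ N_{xy}`, which is `T`-invariant; this identifies `ker Φ*` with `(V*)^T`.
-/

/-- The relations of the (a,b,c) triangle group: `x^a`, `y^b`, `(x*y)^c`
in the free group on two generators. -/
def triangleRels (a b c : ℕ) : Set (FreeGroup (Fin 2)) :=
  {(FreeGroup.of 0) ^ a, (FreeGroup.of 1) ^ b, (FreeGroup.of 0 * FreeGroup.of 1) ^ c}

/-- The triangle group `T_{a,b,c} = ⟨x, y ∣ x^a = y^b = (xy)^c = 1⟩`. -/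
abbrev TriangleGroup (a b c : ℕ) : Type :=
  PresentedGroup (triangleRels a b c)

/-- The generator `x` of the triangle group. -/
def TriangleGroup.x (a b c : ℕ) : TriangleGroup a b c := PresentedGroup.of 0

/-- The generator `y` of the triangle group. -/
def TriangleGroup.y (a b c : ℕ) : TriangleGroup a b c := PresentedGroup.of 1

open Module Finset
open LinearMap (ker)

namespace LinearMap

variable {K V W : Type*} [Field K] [AddCommGroup V] [Module K V] [AddCommGroup W] [Module K W]
  [FiniteDimensional K V] [FiniteDimensional K W]

theorem finrank_ker_add_finrank_eq_finrank_add_finrank_ker_dualMap (f : V →ₗ[K] W) :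
    finrank K (ker f) + finrank K W = finrank K V + finrank K (ker f.dualMap) := by
  have hker := Subspace.finrank_add_finrank_dualAnnihilator_eq (range f)
  rw [← ker_dualMap_eq_dualAnnihilator_range] at hker
  have := f.finrank_range_add_finrank_ker
  omega

end LinearMap

namespace Representation

variable {k G V : Type*} [Group G] [AddCommGroup V]

section CommRing

variable [CommRing k] [Module k V] (ρ : Representation k G V) {g : G} {n : ℕ}

noncomputable def geomSum (g : G) (n : ℕ) : V →ₗ[k] V :=
  ∑ i ∈ range n, ρ g ^ i

theorem geomSum_succ_apply (v : V) :
    ρ.geomSum g (n + 1) v = ρ.geomSum g n v + ρ (g ^ n) v := by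
  simp [geomSum, sum_range_succ, map_pow]

theorem geomSum_apply_mem_ker (hg : g ^ n = 1) (v : V) :
    ρ.geomSum g n v ∈ ker (ρ g - 1) := by
  have : (ρ g - 1) * ρ.geomSum g n = 0 := by
    rw [geomSum, mul_geom_sum, ← map_pow, hg, map_one, sub_self]
  exact LinearMap.congr_fun this v

theorem geomSum_apply_of_mem_ker {v : V} (hv : v ∈ ker (ρ g - 1)) :
    ρ.geomSum g n v = n • v := by
  rw [LinearMap.mem_ker, LinearMap.sub_apply, Module.End.one_apply, sub_eq_zero] at hv
  simp [geomSum, LinearMap.sum_apply, Module.End.pow_apply, Function.iterate_fixed hv]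

theorem apply_eq_of_mem_dual_invariants {f : Dual k V} (hf : f ∈ ρ.dual.invariants) (g : G)
    (v : V) : f (ρ g v) = f v := by
  have := LinearMap.congr_fun (hf g⁻¹) v
  rwa [dual_apply, inv_inv, Dual.transpose_apply] at this

theorem apply_geomSum_of_mem_dual_invariants {f : Dual k V} (hf : f ∈ ρ.dual.invariants)
    (v : V) : f (ρ.geomSum g n v) = n • f v := by
  simp [geomSum, LinearMap.sum_apply, ← map_pow, ρ.apply_eq_of_mem_dual_invariants hf]

theorem mem_dual_invariants_of_closure_eq_top {S : Set G} (hS : Subgroup.closure S = ⊤)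
    {f : Dual k V} (hf : ∀ g ∈ S, ∀ v, f (ρ g v) = f v) : f ∈ ρ.dual.invariants := by
  have key (g : G) : ∀ v, f (ρ g v) = f v := by
    induction (hS ▸ Subgroup.mem_top g : g ∈ Subgroup.closure S) using
      Subgroup.closure_induction with
    | mem g hg => exact hf g hg
    | one => simp
    | mul g h _ _ hg hh => simp [hg, hh]
    | inv g _ hg => exact fun v ↦ by rw [← hg, self_inv_apply]
  exact fun g ↦ LinearMap.ext fun v ↦ by simp [dual_apply, Dual.transpose_apply, key]

noncomputable def geomSumToKer (hg : g ^ n = 1) : V →ₗ[k] ker (ρ g - 1) :=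
  (ρ.geomSum g n).codRestrict _ (ρ.geomSum_apply_mem_ker hg)

@[simp]
theorem coe_geomSumToKer_apply (hg : g ^ n = 1) (v : V) :
    (ρ.geomSumToKer hg v : V) = ρ.geomSum g n v :=
  rfl

theorem geomSumToKer_apply_self (hg : g ^ n = 1) (v : V) :
    ρ.geomSumToKer hg (ρ g v) = ρ.geomSumToKer hg v := Subtype.ext <| by
  have : ρ.geomSum g n * (ρ g - 1) = 0 := by
    rw [geomSum, geom_sum_mul, ← map_pow, hg, map_one, sub_self]
  simpa [sub_eq_zero, mul_sub] using LinearMap.congr_fun this v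

end CommRing

theorem geomSumToKer_surjective [Field k] [Module k V] (ρ : Representation k G V) {g : G} {n : ℕ}
    (hg : g ^ n = 1) (hn : (n : k) ≠ 0) : Function.Surjective (ρ.geomSumToKer hg) := fun v ↦
  ⟨(n : k)⁻¹ • (v : V), Subtype.ext <| by
    simp [ρ.geomSum_apply_of_mem_ker v.2, ← Nat.cast_smul_eq_nsmul k, smul_smul, hn]⟩

section SemidirectProduct

variable [CommRing k] [Module k V] (ρ : Representation k G V)

def toMulAut : G →* MulAut (Multiplicative V) where
  toFun g := AddEquiv.toMultiplicative
    ⟨⟨ρ g, ρ g⁻¹, ρ.inv_self_apply g, ρ.self_inv_apply g⟩, map_add _⟩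
  map_one' := by ext; simp
  map_mul' _ _ := by ext; simp

@[simp]
theorem toAdd_toMulAut_apply (g : G) (m : Multiplicative V) :
    (ρ.toMulAut g m).toAdd = ρ g m.toAdd :=
  rfl

theorem semidirectProduct_mk_pow (v : V) (g : G) (n : ℕ) :
    (⟨.ofAdd v, g⟩ : Multiplicative V ⋊[ρ.toMulAut] G) ^ n =
      ⟨.ofAdd (ρ.geomSum g n v), g ^ n⟩ := by
  induction n with
  | zero => ext <;> simp [geomSum]
  | succ n ih =>
    rw [pow_succ, ih, SemidirectProduct.mul_def, geomSum_succ_apply, pow_succ]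
    rfl

theorem semidirectProduct_mk_pow_eq_one_iff {v : V} {g : G} {n : ℕ} (hg : g ^ n = 1) :
    (⟨.ofAdd v, g⟩ : Multiplicative V ⋊[ρ.toMulAut] G) ^ n = 1 ↔ ρ.geomSum g n v = 0 := by
  rw [semidirectProduct_mk_pow, SemidirectProduct.ext_iff]
  simp [hg]

end SemidirectProduct

end Representation

namespace groupCohomology

universe u

variable {k G V : Type u} [CommRing k] [Group G] [AddCommGroup V] [Module k V]
  {ρ : Representation k G V}

def cocycles₁.toSemidirectProduct (u : cocycles₁ (Rep.of ρ)) :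
    G →* Multiplicative V ⋊[ρ.toMulAut] G where
  toFun g := ⟨.ofAdd (u g), g⟩
  map_one' := by ext <;> simp
  map_mul' g h := by
    ext
    · simp [(mem_cocycles₁_iff u).1 u.2 g h, add_comm]
    · rfl

theorem cocycles₁.toSemidirectProduct_apply (u : cocycles₁ (Rep.of ρ)) (g : G) :
    cocycles₁.toSemidirectProduct u g = ⟨.ofAdd (u g), g⟩ :=
  rfl

def cocycles₁.ofSemidirectProduct (φ : G →* Multiplicative V ⋊[ρ.toMulAut] G)
    (hφ : ∀ g, (φ g).right = g) : cocycles₁ (Rep.of ρ) :=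
  ⟨fun g ↦ (φ g).left.toAdd, (mem_cocycles₁_iff _).2 fun g h ↦ by
    simp [SemidirectProduct.mul_left, hφ, add_comm]⟩

theorem cocycles₁.ofSemidirectProduct_apply (φ : G →* Multiplicative V ⋊[ρ.toMulAut] G)
    (hφ : ∀ g, (φ g).right = g) (g : G) : ofSemidirectProduct φ hφ g = (φ g).left.toAdd :=
  rfl

theorem cocycles₁_ext_of_closure_eq_top {S : Set G} (hS : Subgroup.closure S = ⊤)
    {u u' : cocycles₁ (Rep.of ρ)} (h : ∀ g ∈ S, u g = u' g) : u = u' := by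
  have := MonoidHom.eq_of_eqOn_dense hS (f := cocycles₁.toSemidirectProduct u)
    (g := cocycles₁.toSemidirectProduct u')
    fun g hg ↦ by simp [cocycles₁.toSemidirectProduct_apply, h g hg]
  ext g
  simpa [cocycles₁.toSemidirectProduct_apply] using
    congrArg (·.left.toAdd) (DFunLike.congr_fun this g)

end groupCohomology

namespace TriangleGroup

variable {a b c : ℕ}

theorem x_pow : x a b c ^ a = 1 :=
  (QuotientGroup.eq_one_iff _).2 <| Subgroup.subset_normalClosure <| by simp [triangleRels]

theorem y_pow : y a b c ^ b = 1 :=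
  (QuotientGroup.eq_one_iff _).2 <| Subgroup.subset_normalClosure <| by simp [triangleRels]

theorem x_mul_y_pow : (x a b c * y a b c) ^ c = 1 :=
  (QuotientGroup.eq_one_iff _).2 <| Subgroup.subset_normalClosure <| by simp [triangleRels]

theorem closure_x_y : Subgroup.closure {x a b c, y a b c} = ⊤ := by
  rw [← PresentedGroup.closure_range_of]
  congr
  ext t
  simp [Fin.exists_fin_two, x, y, eq_comm]

theorem forall_mem_triangleRels_iff {H : Type*} [Group H] (f : Fin 2 → H) :
    (∀ r ∈ triangleRels a b c, FreeGroup.lift f r = 1) ↔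
      f 0 ^ a = 1 ∧ f 1 ^ b = 1 ∧ (f 0 * f 1) ^ c = 1 := by
  simp [triangleRels]

section CommRing

open groupCohomology LinearMap

variable {k V : Type} [CommRing k] [AddCommGroup V] [Module k V]
  (ρ : Representation k (TriangleGroup a b c) V)

abbrev RelatorSpace : Type :=
  ker (ρ (x a b c) - 1) × ker (ρ (y a b c) - 1) × ker (ρ (x a b c * y a b c) - 1)

/-- `(v, w)` is sent to the values `u (x ^ a)`, `u (y ^ b)`, `u ((x * y) ^ c)` of a cocycle `u`
with `u x = v` and `u y = w`. -/
noncomputable def relatorMap : V × V →ₗ[k] RelatorSpace ρ :=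
  ((ρ.geomSumToKer x_pow).comp (fst k V V)).prod
    (((ρ.geomSumToKer y_pow).comp (snd k V V)).prod
      ((ρ.geomSumToKer x_mul_y_pow).comp (fst k V V + (ρ (x a b c)).comp (snd k V V))))

theorem relatorMap_apply (v w : V) :
    relatorMap ρ (v, w) = (ρ.geomSumToKer x_pow v, ρ.geomSumToKer y_pow w,
      ρ.geomSumToKer x_mul_y_pow (v + ρ (x a b c) w)) :=
  rfl

theorem mem_ker_relatorMap_iff {v w : V} :
    (v, w) ∈ ker (relatorMap ρ) ↔
      (⟨.ofAdd v, x a b c⟩ : Multiplicative V ⋊[ρ.toMulAut] _) ^ a = 1 ∧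
      (⟨.ofAdd w, y a b c⟩ : Multiplicative V ⋊[ρ.toMulAut] _) ^ b = 1 ∧
      ((⟨.ofAdd v, x a b c⟩ : Multiplicative V ⋊[ρ.toMulAut] _) * ⟨.ofAdd w, y a b c⟩) ^ c =
        1 := by
  have hxy : (⟨.ofAdd v, x a b c⟩ : Multiplicative V ⋊[ρ.toMulAut] _) * ⟨.ofAdd w, y a b c⟩ =
      ⟨.ofAdd (v + ρ (x a b c) w), x a b c * y a b c⟩ := rfl
  rw [hxy, ρ.semidirectProduct_mk_pow_eq_one_iff x_pow, ρ.semidirectProduct_mk_pow_eq_one_iff y_pow,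
    ρ.semidirectProduct_mk_pow_eq_one_iff x_mul_y_pow, mem_ker, relatorMap_apply]
  simp only [Prod.mk_eq_zero, ← Subtype.coe_inj, Representation.coe_geomSumToKer_apply,
    ZeroMemClass.coe_zero]

def evalGenerators : cocycles₁ (Rep.of ρ) →ₗ[k] V × V where
  toFun u := (u (x a b c), u (y a b c))
  map_add' _ _ := rfl
  map_smul' _ _ := rfl

theorem evalGenerators_injective : Function.Injective (evalGenerators ρ) := fun _ _ h ↦
  cocycles₁_ext_of_closure_eq_top closure_x_y <| by
    rintro g (rfl | rfl)
    exacts [congrArg Prod.fst h, congrArg Prod.snd h]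

theorem range_evalGenerators : range (evalGenerators ρ) = ker (relatorMap ρ) := by
  ext ⟨v, w⟩
  rw [mem_ker_relatorMap_iff]
  constructor
  · rintro ⟨u, hu⟩
    obtain ⟨rfl, rfl⟩ := Prod.mk.inj hu
    simp only [← cocycles₁.toSemidirectProduct_apply, ← map_mul, ← map_pow, x_pow, y_pow,
      x_mul_y_pow, map_one, and_self]
  · intro h
    let φ := PresentedGroup.toGroup ((forall_mem_triangleRels_iff
      ![(⟨.ofAdd v, x a b c⟩ : Multiplicative V ⋊[ρ.toMulAut] _), ⟨.ofAdd w, y a b c⟩]).2 h)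
    have hφ : SemidirectProduct.rightHom.comp φ = MonoidHom.id _ :=
      PresentedGroup.ext fun i ↦ by fin_cases i <;> rfl
    refine ⟨cocycles₁.ofSemidirectProduct φ (DFunLike.congr_fun hφ), ?_⟩
    simp [evalGenerators, cocycles₁.ofSemidirectProduct_apply, φ, x, y]

theorem finrank_cocycles₁ :
    finrank k (cocycles₁ (Rep.of ρ)) = finrank k (ker (relatorMap ρ)) := by
  rw [← range_evalGenerators,
    (LinearEquiv.ofInjective _ (evalGenerators_injective ρ)).finrank_eq]

noncomputable def xyNorm : V →ₗ[k] RelatorSpace ρ :=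
  inr k _ _ ∘ₗ inr k _ _ ∘ₗ ρ.geomSumToKer x_mul_y_pow

theorem apply_relatorMap (ψ : Dual k (RelatorSpace ρ)) (v w : V) :
    ψ (relatorMap ρ (v, w)) = ψ (inl k _ _ (ρ.geomSumToKer x_pow v)) +
      ψ (inr k _ _ (inl k _ _ (ρ.geomSumToKer y_pow w))) +
        (xyNorm ρ).dualMap ψ (v + ρ (x a b c) w) := by
  rw [relatorMap_apply, dualMap_apply, ← map_add, ← map_add]
  congr 1
  ext <;> simp [xyNorm]

variable {ρ} {ψ : Dual k (RelatorSpace ρ)}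

theorem apply_inl_geomSumToKer (hψ : ψ ∈ ker (relatorMap ρ).dualMap) (v : V) :
    ψ (inl k _ _ (ρ.geomSumToKer x_pow v)) = -(xyNorm ρ).dualMap ψ v := by
  have h : ψ (relatorMap ρ (v, 0)) = 0 := LinearMap.congr_fun (mem_ker.1 hψ) (v, 0)
  rw [apply_relatorMap] at h
  simp only [map_zero, add_zero] at h
  exact eq_neg_of_add_eq_zero_left h

theorem apply_inr_inl_geomSumToKer (hψ : ψ ∈ ker (relatorMap ρ).dualMap) (w : V) :
    ψ (inr k _ _ (inl k _ _ (ρ.geomSumToKer y_pow w))) =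
      -(xyNorm ρ).dualMap ψ (ρ (x a b c) w) := by
  have h : ψ (relatorMap ρ (0, w)) = 0 := LinearMap.congr_fun (mem_ker.1 hψ) (0, w)
  rw [apply_relatorMap] at h
  simp only [map_zero, zero_add] at h
  exact eq_neg_of_add_eq_zero_left h

theorem dualMap_xyNorm_mem_invariants (hψ : ψ ∈ ker (relatorMap ρ).dualMap) :
    (xyNorm ρ).dualMap ψ ∈ ρ.dual.invariants := by
  have hx (v : V) : (xyNorm ρ).dualMap ψ (ρ (x a b c) v) = (xyNorm ρ).dualMap ψ v := by
    have := apply_inl_geomSumToKer hψ (ρ (x a b c) v)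
    rwa [ρ.geomSumToKer_apply_self, apply_inl_geomSumToKer hψ, neg_inj, eq_comm] at this
  have hy (w : V) : (xyNorm ρ).dualMap ψ (ρ (y a b c) w) = (xyNorm ρ).dualMap ψ w := by
    have := apply_inr_inl_geomSumToKer hψ (ρ (y a b c) w)
    rwa [ρ.geomSumToKer_apply_self, apply_inr_inl_geomSumToKer hψ, neg_inj, hx, hx,
      eq_comm] at this
  exact ρ.mem_dual_invariants_of_closure_eq_top closure_x_y <| by
    rintro g (rfl | rfl)
    exacts [hx, hy]

end CommRing

section Field

open LinearMap

variable {k V : Type} [Field k] [AddCommGroup V] [Module k V]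
  {ρ : Representation k (TriangleGroup a b c) V}

theorem eq_zero_of_dualMap_xyNorm_eq_zero {ψ : Dual k (RelatorSpace ρ)}
    (hψ : ψ ∈ ker (relatorMap ρ).dualMap) (ha : (a : k) ≠ 0) (hb : (b : k) ≠ 0)
    (hc : (c : k) ≠ 0) (h : (xyNorm ρ).dualMap ψ = 0) : ψ = 0 := by
  have hF (v : V) : (xyNorm ρ).dualMap ψ v = 0 := by rw [h, LinearMap.zero_apply]
  refine prod_ext ?_ (prod_ext ?_ ?_)
  · refine (cancel_right (ρ.geomSumToKer_surjective x_pow ha)).1 (LinearMap.ext fun v ↦ ?_)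
    rw [comp_apply, comp_apply, apply_inl_geomSumToKer hψ, hF, neg_zero]
    rfl
  · refine (cancel_right (ρ.geomSumToKer_surjective y_pow hb)).1 (LinearMap.ext fun w ↦ ?_)
    rw [comp_apply, comp_apply, comp_apply, apply_inr_inl_geomSumToKer hψ, hF, neg_zero]
    rfl
  · exact (cancel_right (ρ.geomSumToKer_surjective x_mul_y_pow hc)).1 (LinearMap.ext hF)

variable (ρ) in
/-- Inverse to `(xyNorm ρ).dualMap` on `ker (relatorMap ρ).dualMap`; the coefficients come from
`apply_inl_geomSumToKer`, `apply_inr_inl_geomSumToKer` and `s = geomSum (a⁻¹ • s)` for `s` fixed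
by `x` (likewise for `y` and `x * y`). -/
noncomputable def invariantToDual (f : Dual k V) : Dual k (RelatorSpace ρ) :=
  (-(a : k)⁻¹ • f.domRestrict _).coprod
    ((-(b : k)⁻¹ • f.domRestrict _).coprod ((c : k)⁻¹ • f.domRestrict _))

theorem invariantToDual_mem_ker {f : Dual k V} (hf : f ∈ ρ.dual.invariants) (ha : (a : k) ≠ 0)
    (hb : (b : k) ≠ 0) (hc : (c : k) ≠ 0) :
    invariantToDual ρ f ∈ ker (relatorMap ρ).dualMap := by
  refine mem_ker.2 (LinearMap.ext fun ⟨v, w⟩ ↦ ?_)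
  simp [invariantToDual, relatorMap_apply, ρ.apply_geomSum_of_mem_dual_invariants hf,
    ρ.apply_eq_of_mem_dual_invariants hf]
  field_simp
  ring

theorem dualMap_xyNorm_invariantToDual {f : Dual k V} (hf : f ∈ ρ.dual.invariants)
    (hc : (c : k) ≠ 0) : (xyNorm ρ).dualMap (invariantToDual ρ f) = f := by
  ext v
  simp [invariantToDual, xyNorm, ρ.apply_geomSum_of_mem_dual_invariants hf, hc]

variable (ρ) in
theorem finrank_ker_dualMap_relatorMap (ha : (a : k) ≠ 0) (hb : (b : k) ≠ 0) (hc : (c : k) ≠ 0) :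
    finrank k (ker (relatorMap ρ).dualMap) = finrank k ρ.dual.invariants := by
  let e : ker (relatorMap ρ).dualMap →ₗ[k] ρ.dual.invariants :=
    ((xyNorm ρ).dualMap ∘ₗ (ker _).subtype).codRestrict _
      fun ψ ↦ dualMap_xyNorm_mem_invariants ψ.2
  refine (LinearEquiv.ofBijective e ⟨?_, fun f ↦ ?_⟩).finrank_eq
  · intro ψ ψ' h
    refine Subtype.ext <| sub_eq_zero.1 <|
      eq_zero_of_dualMap_xyNorm_eq_zero (sub_mem ψ.2 ψ'.2) ha hb hc ?_
    rw [map_sub, sub_eq_zero]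
    exact congrArg Subtype.val h
  · exact ⟨⟨_, invariantToDual_mem_ker f.2 ha hb hc⟩,
      Subtype.ext (dualMap_xyNorm_invariantToDual f.2 hc)⟩

end Field

end TriangleGroup

open Module groupCohomology in
theorem dim_oneCocycles_triangleGroup_general (a b c : ℕ) (ha : 2 ≤ a) (hb : 2 ≤ b) (hc : 2 ≤ c)
    (V : Type) [AddCommGroup V] [Module ℂ V] [FiniteDimensional ℂ V]
    (ρ : Representation ℂ (TriangleGroup a b c) V) :
    (finrank ℂ (cocycles₁ (Rep.of ρ)) : ℤ) =
      2 * finrank ℂ V + finrank ℂ ρ.dual.invariants -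
        (finrank ℂ (LinearMap.ker (ρ (TriangleGroup.x a b c) - 1)) +
         finrank ℂ (LinearMap.ker (ρ (TriangleGroup.y a b c) - 1)) +
         finrank ℂ (LinearMap.ker (ρ (TriangleGroup.x a b c * TriangleGroup.y a b c) - 1))) := by
  have hne {n : ℕ} (hn : 2 ≤ n) : (n : ℂ) ≠ 0 := Nat.cast_ne_zero.2 (by omega)
  have hZ := TriangleGroup.finrank_cocycles₁ ρ
  have hΦ :=
    (TriangleGroup.relatorMap ρ).finrank_ker_add_finrank_eq_finrank_add_finrank_ker_dualMap
  have hΦ' := TriangleGroup.finrank_ker_dualMap_relatorMap ρ (hne ha) (hne hb) (hne hc)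
  simp only [finrank_prod] at hΦ
  omega

open Module groupCohomology in
/-- Weil's formula for the dimension of the space of `1`-cocycles of a representation of a
hyperbolic triangle group on a finite-dimensional complex vector space. -/
theorem dim_oneCocycles_triangleGroup (a b c : ℕ) (ha : 2 ≤ a) (hb : 2 ≤ b) (hc : 2 ≤ c)
    (hhyp : (1 : ℚ) / a + 1 / b + 1 / c < 1)
    (V : Type) [AddCommGroup V] [Module ℂ V] [FiniteDimensional ℂ V]
    (ρ : Representation ℂ (TriangleGroup a b c) V) :
    (finrank ℂ (cocycles₁ (Rep.of ρ)) : ℤ) =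
      2 * finrank ℂ V + finrank ℂ ρ.dual.invariants -
        (finrank ℂ (LinearMap.ker (ρ (TriangleGroup.x a b c) - 1)) +
         finrank ℂ (LinearMap.ker (ρ (TriangleGroup.y a b c) - 1)) +
         finrank ℂ (LinearMap.ker (ρ (TriangleGroup.x a b c * TriangleGroup.y a b c) - 1))) :=
  dim_oneCocycles_triangleGroup_general a b c ha hb hc V ρ
end

section
/- Let r ≥ 2 and a ≥ 2 be integers, and write 2r = αa + β with integers α ≥ 0 and 0 ≤ β < a. Let ε_a = 1 if a is odd and ε_a = 0 if a is even. Then α²a + β(2α + 1) is even and r + 2·∑_{j=1}^{r} ⌊(2j−1)/a⌋ = (α²a + β(2α + 1))/2 + ε_a·⌈α/2⌉; equivalently, 2r + 4·∑_{j=1}^{r} ⌊(2j−1)/a⌋ = α²a + β(2α + 1) + 2ε_a·⌈α/2⌉. -/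
/-!
Write `n = (n / a) * a + n % a`. Lawther's quantity `F(n) = (n / a)² a + (n % a)(2 (n / a) + 1)`
grows by `2 (n / a) + 1` from `n` to `n + 1`, also when `n + 1` is a multiple of `a`, so
`F(n) = n + 2 ∑_{k < n} ⌊k / a⌋`; this makes `F(2r)` even. Pairing `k = 2j` with `k = 2j + 1`,
`2 ∑_{j < r} ⌊(2j + 1) / a⌋` exceeds `∑_{k < 2r} ⌊k / a⌋` by the number of odd multiples of `a`
below `2r`, which is `0` for even `a` and `⌈(2r / a) / 2⌉` for odd `a`.
-/

open Finset

theorem sum_Icc_one_eq_sum_range {M : Type*} [AddCommMonoid M] (f : ℕ → M) (n : ℕ) :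
    ∑ j ∈ Icc 1 n, f j = ∑ j ∈ range n, f (j + 1) := by
  rw [← Ico_add_one_right_eq_Icc, sum_Ico_eq_sum_range]
  simp only [Nat.add_sub_cancel, add_comm 1]

theorem add_two_mul_sum_range_div (a n : ℕ) :
    n + 2 * ∑ k ∈ range n, k / a = (n / a) ^ 2 * a + n % a * (2 * (n / a) + 1) := by
  induction n with
  | zero => simp
  | succ n ih =>
    rcases Nat.eq_zero_or_pos a with rfl | ha
    · simp
    rw [sum_range_succ]
    have hn := Nat.div_add_mod n a
    obtain hs | hs : n % a + 1 < a ∨ n % a + 1 = a := by have := Nat.mod_lt n ha; omega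
    · obtain ⟨hq, hr⟩ := (Nat.div_mod_unique ha).mpr
        (⟨by linarith, hs⟩ : n % a + 1 + a * (n / a) = n + 1 ∧ _)
      rw [hq, hr]
      linear_combination ih
    · obtain ⟨hq, hr⟩ := (Nat.div_mod_unique ha).mpr
        (⟨by nlinarith, ha⟩ : 0 + a * (n / a + 1) = n + 1 ∧ _)
      rw [hq, hr]
      linear_combination ih + (2 * (n / a) + 1) * hs

theorem sum_range_two_mul_div_add_count (a r : ℕ) :
    ∑ k ∈ range (2 * r), k / a + Nat.count (fun j ↦ a ∣ 2 * j + 1) r =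
      2 * ∑ j ∈ range r, (2 * j + 1) / a := by
  induction r with
  | zero => simp
  | succ r ih =>
    rw [show 2 * (r + 1) = 2 * r + 1 + 1 by ring, sum_range_succ, sum_range_succ, sum_range_succ,
      Nat.count_succ, Nat.succ_div (a := 2 * r)]
    omega

theorem div_mod_two_of_odd_of_dvd {a n : ℕ} (ha : Odd a) (h : a ∣ n) : n / a % 2 = n % 2 := by
  obtain ⟨m, rfl⟩ := h
  rw [Nat.mul_div_cancel_left m ha.pos, Nat.mul_mod, Nat.odd_iff.mp ha, one_mul, Nat.mod_mod]

theorem count_dvd_two_mul_add_one_of_odd {a : ℕ} (ha : Odd a) (r : ℕ) :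
    Nat.count (fun j ↦ a ∣ 2 * j + 1) r = (2 * r / a + 1) / 2 := by
  induction r with
  | zero => simp
  | succ r ih =>
    have h₁ := Nat.succ_div (a := 2 * r) (b := a)
    have h₂ := Nat.succ_div (a := 2 * r + 1) (b := a)
    rw [Nat.count_succ, ih, show 2 * (r + 1) = 2 * r + 1 + 1 by ring]
    by_cases d₁ : a ∣ 2 * r + 1
    · have := div_mod_two_of_odd_of_dvd ha d₁
      simp only [d₁, if_true] at h₁ ⊢
      split_ifs at h₂ <;> omega
    by_cases d₂ : a ∣ 2 * r + 1 + 1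
    · have := div_mod_two_of_odd_of_dvd ha d₂
      simp only [d₁, d₂, if_true, if_false] at h₁ h₂ ⊢
      omega
    · simp only [d₁, d₂, if_false] at h₁ h₂ ⊢
      omega

theorem count_dvd_two_mul_add_one_of_even {a : ℕ} (ha : Even a) (r : ℕ) :
    Nat.count (fun j ↦ a ∣ 2 * j + 1) r = 0 := by
  rw [Nat.count_eq_card_filter_range, card_eq_zero, filter_eq_empty_iff]
  exact fun j _ hj ↦ Nat.not_even_two_mul_add_one j (even_iff_two_dvd.mpr (ha.two_dvd.trans hj))

theorem lawther_formula_BC_general (r a α β : ℕ)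
    (hdiv : 2 * r = α * a + β) (hβ : β < a) :
    Even (α ^ 2 * a + β * (2 * α + 1)) ∧
    r + 2 * ∑ j ∈ Finset.Icc 1 r, (2 * j - 1) / a =
      (α ^ 2 * a + β * (2 * α + 1)) / 2 + (if Odd a then 1 else 0) * ((α + 1) / 2) := by
  obtain ⟨hq, hr⟩ := (Nat.div_mod_unique (by omega : 0 < a)).mpr
    (⟨by linarith, hβ⟩ : β + a * α = 2 * r ∧ β < a)
  have hF := add_two_mul_sum_range_div a (2 * r)
  rw [hq, hr] at hF
  have hpair := sum_range_two_mul_div_add_count a r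
  have hodd : ∑ j ∈ Icc 1 r, (2 * j - 1) / a = ∑ j ∈ range r, (2 * j + 1) / a := by
    rw [sum_Icc_one_eq_sum_range]
    exact sum_congr rfl fun j _ ↦ by rw [show 2 * (j + 1) - 1 = 2 * j + 1 by omega]
  refine ⟨⟨r + ∑ k ∈ range (2 * r), k / a, by omega⟩, ?_⟩
  rw [hodd]
  rcases Nat.even_or_odd a with ha | ha
  · rw [count_dvd_two_mul_add_one_of_even ha] at hpair
    simp only [Nat.not_odd_iff_even.mpr ha, if_false]
    omega
  · rw [count_dvd_two_mul_add_one_of_odd ha, hq] at hpair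
    simp only [ha, if_true]
    omega

/-- For the root systems of types `B_r` and `C_r`, with exponents `1, 3, …, 2r−1`, the quantity
`r + 2·∑_{j=1}^r ⌊(2j−1)/a⌋` equals Lawther's formula
`(α²a + β(2α+1))/2 + ε_a·⌈α/2⌉`, where `2r = αa + β` with `0 ≤ β < a` and `ε_a = 1` if `a`
is odd, `0` otherwise.  In particular `α²a + β(2α+1)` is even. -/
theorem lawther_formula_BC (r a α β : ℕ) (hr : 2 ≤ r) (ha : 2 ≤ a)
    (hdiv : 2 * r = α * a + β) (hβ : β < a) :
    Even (α ^ 2 * a + β * (2 * α + 1)) ∧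
    r + 2 * ∑ j ∈ Finset.Icc 1 r, (2 * j - 1) / a =
      (α ^ 2 * a + β * (2 * α + 1)) / 2 + (if Odd a then 1 else 0) * ((α + 1) / 2) :=
  lawther_formula_BC_general r a α β hdiv hβ
end

section
/- Let r ≥ 4 and a ≥ 2 be integers, and write 2r − 2 = αa + β with integers α ≥ 0 and 0 ≤ β < a. For an integer γ, let ε_γ = 1 if γ is odd and ε_γ = 0 if γ is even. Then α²a + β(2α + 1) is even and r + 2·( ∑_{j=1}^{r−1} ⌊(2j−1)/a⌋ + ⌊(r−1)/a⌋ ) = (α²a + β(2α + 1))/2 + ε_a·⌈α/2⌉ + α + 1 − ε_α. -/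
/-!
Put `n = r - 1`, so `2n = αa + β`. Summing `⌊k/a⌋` over `k < 2n` one block of length `a` at a
time gives `α²a + β(2α+1) = 2·∑_{k<2n} ⌊k/a⌋ + 2n`, which is even. Splitting that sum by the
parity of `k`, the odd term `⌊(2j+1)/a⌋` exceeds the even term `⌊2j/a⌋` by one exactly when
`a ∣ 2j+1`; such `j < n` exist only for odd `a`, and then they correspond to the odd multiples
`a, 3a, 5a, …` below `2n`, of which there are `⌈α/2⌉`. Finally `α - ε_α = 2⌊α/2⌋ = 2⌊n/a⌋`.
-/
open Finset

theorem Nat.sum_range_mul_add_div {a s : ℕ} (q : ℕ) (hs : s ≤ a) :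
    ∑ i ∈ range s, (a * q + i) / a = s * q := by
  calc ∑ i ∈ range s, (a * q + i) / a = ∑ _i ∈ range s, q := by
        refine sum_congr rfl fun i hi => ?_
        have hia : i < a := (mem_range.1 hi).trans_le hs
        rw [Nat.mul_add_div (by omega), Nat.div_eq_of_lt hia, add_zero]
    _ = s * q := by rw [sum_const, card_range, smul_eq_mul]

theorem Nat.two_mul_sum_range_mul_div (a q : ℕ) :
    2 * ∑ k ∈ range (a * q), k / a + a * q = q ^ 2 * a := by
  induction q with
  | zero => simp
  | succ q ih =>
    rw [mul_add_one, sum_range_add, Nat.sum_range_mul_add_div q le_rfl]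
    linear_combination ih

theorem Nat.two_mul_sum_range_div {a s : ℕ} (q : ℕ) (hs : s ≤ a) :
    2 * ∑ k ∈ range (a * q + s), k / a + (a * q + s) = q ^ 2 * a + s * (2 * q + 1) := by
  rw [sum_range_add, Nat.sum_range_mul_add_div q hs]
  linear_combination Nat.two_mul_sum_range_mul_div a q

theorem Finset.sum_range_two_mul {M : Type*} [AddCommMonoid M] (f : ℕ → M) (n : ℕ) :
    ∑ k ∈ range (2 * n), f k = ∑ j ∈ range n, (f (2 * j) + f (2 * j + 1)) := by
  induction n with
  | zero => simp
  | succ n ih => rw [mul_add, sum_range_succ, sum_range_succ, sum_range_succ, ih, add_assoc]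

theorem Nat.sum_range_two_mul_add_one_div (a n : ℕ) :
    ∑ j ∈ range n, (2 * j + 1) / a =
      ∑ j ∈ range n, 2 * j / a + #{j ∈ range n | a ∣ 2 * j + 1} := by
  simp only [Nat.succ_div, sum_add_distrib, sum_boole, Nat.cast_id]

theorem Odd.dvd_two_mul_add_one_iff {a : ℕ} (ha : Odd a) (n : ℕ) :
    a ∣ 2 * n + 1 ↔ 2 * a ∣ 2 * n + a + 1 := by
  rw [add_right_comm, ← Nat.dvd_add_self_right]
  refine ⟨fun h => Nat.Coprime.mul_dvd_of_dvd_of_dvd ?_ ?_ h, dvd_of_mul_left_dvd⟩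
  · exact (Nat.coprime_two_left).2 ha
  · exact ((odd_two_mul_add_one n).add_odd ha).two_dvd

/-- `j` is counted iff `2j + 1 = a(2t + 1)` for some `t`, and `a(2t + 1) < 2n` iff
`t < (2n + a)/(2a)`. -/
theorem Nat.card_filter_dvd_two_mul_add_one_of_odd {a : ℕ} (ha : Odd a) (n : ℕ) :
    #{j ∈ range n | a ∣ 2 * j + 1} = (2 * n + a) / (2 * a) := by
  induction n with
  | zero =>
    rw [range_zero, filter_empty, card_empty, mul_zero, zero_add, Nat.div_eq_of_lt]
    exact lt_two_mul_self ha.pos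
  | succ n ih =>
    have hodd : ¬ 2 * a ∣ 2 * n + a + 1 + 1 := fun h => by
      have := dvd_of_mul_right_dvd h
      rcases ha with ⟨k, rfl⟩
      omega
    rw [range_add_one, filter_insert, show 2 * (n + 1) + a = 2 * n + a + 1 + 1 by ring,
      Nat.succ_div, Nat.succ_div, if_neg hodd, ← ih]
    simp only [ha.dvd_two_mul_add_one_iff n]
    split_ifs with hdvd
    · rw [card_insert_of_notMem (by simp)]
    · rfl

theorem Nat.card_filter_dvd_two_mul_add_one (a n : ℕ) :
    #{j ∈ range n | a ∣ 2 * j + 1} = (if Odd a then 1 else 0) * ((2 * n / a + 1) / 2) := by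
  split_ifs with ha
  · rw [one_mul, Nat.card_filter_dvd_two_mul_add_one_of_odd ha, ← Nat.add_div_right _ ha.pos,
      Nat.div_div_eq_div_mul, mul_comm a 2]
  · rw [zero_mul, Finset.card_eq_zero, filter_eq_empty_iff]
    intro j _ hdvd
    exact ha (Odd.of_dvd_nat (odd_two_mul_add_one j) hdvd)

theorem Nat.sum_Icc_two_mul_sub_one_div (a n : ℕ) :
    ∑ j ∈ Icc 1 n, (2 * j - 1) / a = ∑ j ∈ range n, (2 * j + 1) / a := by
  rw [← Ico_add_one_right_eq_Icc, sum_Ico_eq_sum_range, add_tsub_cancel_right]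
  exact sum_congr rfl fun j _ => by rw [show 2 * (1 + j) - 1 = 2 * j + 1 by omega]

theorem lawther_formula_D_general (r a α β : ℕ) (hr : 4 ≤ r)
    (hdiv : 2 * r - 2 = α * a + β) (hβ : β < a) :
    Even (α ^ 2 * a + β * (2 * α + 1)) ∧
    r + 2 * ((∑ j ∈ Finset.Icc 1 (r - 1), (2 * j - 1) / a) + (r - 1) / a) =
      (α ^ 2 * a + β * (2 * α + 1)) / 2 + (if Odd a then 1 else 0) * ((α + 1) / 2) +
        α + 1 - (if Odd α then 1 else 0) := by
  obtain ⟨n, rfl⟩ : ∃ n, r = n + 1 := ⟨r - 1, by omega⟩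
  have h2n : a * α + β = 2 * n := by rw [mul_comm]; omega
  have hα : 2 * n / a = α := by
    rw [← h2n, Nat.mul_add_div (by omega), Nat.div_eq_of_lt hβ, add_zero]
  have hnum : α ^ 2 * a + β * (2 * α + 1) = 2 * (∑ k ∈ range (2 * n), k / a + n) := by
    rw [← Nat.two_mul_sum_range_div α hβ.le, h2n]
    ring
  refine ⟨hnum ▸ even_two_mul _, ?_⟩
  have hsplit := (Finset.sum_range_two_mul (· / a) n).trans sum_add_distrib
  have hodd := Nat.sum_range_two_mul_add_one_div a n
  have hcount := Nat.card_filter_dvd_two_mul_add_one a n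
  have hhalf : α / 2 = n / a := by
    rw [← hα, Nat.div_div_eq_div_mul, mul_comm a 2, Nat.mul_div_mul_left _ _ two_pos]
  have hε : (if Odd α then 1 else 0) = α % 2 := by
    split_ifs <;> simp_all [Nat.odd_iff]
  rw [hα] at hcount
  rw [hnum, Nat.mul_div_cancel_left _ two_pos, hε, add_tsub_cancel_right,
    Nat.sum_Icc_two_mul_sub_one_div]
  omega

/-- For the root system of type `D_r`, with exponents `1, 3, …, 2r−3` together with `r−1`,
the quantity `r + 2·(∑_{j=1}^{r−1} ⌊(2j−1)/a⌋ + ⌊(r−1)/a⌋)` equals Lawther's formula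
`(α²a + β(2α+1))/2 + ε_a·⌈α/2⌉ + α + 1 − ε_α`, where `2r − 2 = αa + β` with `0 ≤ β < a`
and, for an integer `γ`, `ε_γ = 1` if `γ` is odd and `0` otherwise.
In particular `α²a + β(2α+1)` is even. -/
theorem lawther_formula_D (r a α β : ℕ) (hr : 4 ≤ r) (ha : 2 ≤ a)
    (hdiv : 2 * r - 2 = α * a + β) (hβ : β < a) :
    Even (α ^ 2 * a + β * (2 * α + 1)) ∧
    r + 2 * ((∑ j ∈ Finset.Icc 1 (r - 1), (2 * j - 1) / a) + (r - 1) / a) =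
      (α ^ 2 * a + β * (2 * α + 1)) / 2 + (if Odd a then 1 else 0) * ((α + 1) / 2) +
        α + 1 - (if Odd α then 1 else 0) :=
  lawther_formula_D_general r a α β hr hdiv hβ
end

section
/- Let n ≥ 1 and let t be an n × n complex matrix with tᵀt = I, det t = 1, and t^k = I for some integer k ≥ 1 (i.e. t ∈ SO_n(ℂ) of finite order). For λ ∈ ℂ let m_λ denote the dimension of the eigenspace ker(t − λI). Then the complex vector space { X ∈ M_n(ℂ) : Xᵀ = −X and tX = Xt } has dimension C(m_1, 2) + C(m_{−1}, 2) + (1/2)·∑_{λ ∈ ℂ, λ ≠ ±1} m_λ², where C(m, 2) = m(m−1)/2 and the sum (which has finitely many nonzero terms) is over all eigenvalues λ of t different from 1 and −1. -/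
open Module Matrix

/-- The space of skew-symmetric `n × n` complex matrices commuting with `t`, i.e. the fixed
points of the adjoint action of `t` on the Lie algebra of `SO_n(ℂ)`. -/
noncomputable def skewCommuting (n : ℕ) (t : Matrix (Fin n) (Fin n) ℂ) :
    Submodule ℂ (Matrix (Fin n) (Fin n) ℂ) where
  carrier := {X | Xᵀ = -X ∧ t * X = X * t}
  zero_mem' := by simp
  add_mem' := by
    rintro X Y ⟨hX1, hX2⟩ ⟨hY1, hY2⟩
    refine ⟨by rw [transpose_add, hX1, hY1, neg_add], by rw [mul_add, add_mul, hX2, hY2]⟩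
  smul_mem' := by
    rintro c X ⟨hX1, hX2⟩
    refine ⟨by rw [transpose_smul, hX1, smul_neg], ?_⟩
    rw [Matrix.mul_smul, Matrix.smul_mul, hX2]

/-- The multiplicity of `λ` as an eigenvalue of the matrix `t`, i.e. the dimension of the
eigenspace `ker (t − λ·1)`. -/
noncomputable def eigMult (n : ℕ) (t : Matrix (Fin n) (Fin n) ℂ) (lam : ℂ) : ℕ :=
  finrank ℂ (LinearMap.ker (Matrix.toLin' (t - lam • 1)))

/-!
Since `t` has finite order it is diagonalizable, `t = P D P⁻¹` with `D = diag d`. The matrix `P`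
is not orthogonal, so conjugation by `P` does not preserve skew-symmetry; congruence
`X ↦ P X Pᵀ` does. For orthogonal `t`, `tX = Xt` is equivalent to `t X tᵀ = X`, and congruence
by `P⁻¹` turns this into `D Z D = Z`, i.e. `Z i j = 0` unless `d i * d j = 1`. The dimension is
therefore the number of pairs `i < j` with `d i * d j = 1`. The ordered pairs number
`∑_λ m_λ m_{λ⁻¹} = ∑_λ m_λ²`, because `(t - λ)ᵀ = -λ tᵀ (t - λ⁻¹)` gives `m_{λ⁻¹} = m_λ`; the
diagonal pairs are those with `d i = ±1`, and halving the rest gives the formula.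
-/

open Polynomial Finset

theorem Module.End.isSemisimple_of_pow_eq_one {K V : Type*} [Field K] [AddCommGroup V]
    [Module K V] [FiniteDimensional K V] {f : Module.End K V} {k : ℕ} (hk : (k : K) ≠ 0)
    (hf : f ^ k = 1) : f.IsSemisimple :=
  isSemisimple_of_squarefree_aeval_eq_zero
    (separable_X_pow_sub_C (1 : K) hk one_ne_zero).squarefree (by simp [hf])

theorem Module.End.exists_basis_eigenvectors {K V ι : Type*} [Field K] [IsAlgClosed K]
    [AddCommGroup V] [Module K V] [FiniteDimensional K V] [Fintype ι]
    (hι : Fintype.card ι = finrank K V) {f : Module.End K V} (hf : f.IsSemisimple) :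
    ∃ (b : Basis ι K V) (d : ι → K), ∀ i, f (b i) = d i • b i := by
  classical
  have hint : DirectSum.IsInternal f.eigenspace :=
    DirectSum.isInternal_submodule_of_iSupIndep_of_iSup_eq_top f.eigenspaces_iSupIndep
      hf.iSup_eigenspace_eq_top
  let b₀ := hint.collectedBasis fun μ ↦ finBasis K (f.eigenspace μ)
  have := FiniteDimensional.fintypeBasisIndex b₀
  let e := Fintype.equivOfCardEq (hι.trans (finrank_eq_card_basis b₀)).symm
  refine ⟨b₀.reindex e, fun i ↦ (e.symm i).1, fun i ↦ ?_⟩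
  rw [Basis.reindex_apply]
  exact mem_eigenspace_iff.mp (hint.collectedBasis_mem _ _)

namespace Matrix

section AddGroup

variable {ι R : Type*} [DecidableEq ι] [AddGroup R]

def skewOfUpper (s : Finset (ι × ι)) (f : s → R) : Matrix ι ι R :=
  of fun i j ↦ if h : (i, j) ∈ s then f ⟨_, h⟩ else if h : (j, i) ∈ s then -f ⟨_, h⟩ else 0

theorem skewOfUpper_apply_of_mem {s : Finset (ι × ι)} (f : s → R) {i j : ι} (h : (i, j) ∈ s) :
    skewOfUpper s f i j = f ⟨_, h⟩ :=
  dif_pos h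

theorem skewOfUpper_apply_of_not_mem {s : Finset (ι × ι)} (f : s → R) {i j : ι}
    (h : (i, j) ∉ s) (h' : (j, i) ∉ s) : skewOfUpper s f i j = 0 := by
  simp [skewOfUpper, h, h']

theorem transpose_skewOfUpper {s : Finset (ι × ι)} (hs : ∀ p ∈ s, p.swap ∉ s) (f : s → R) :
    (skewOfUpper s f)ᵀ = -skewOfUpper s f := by
  ext i j
  simp only [skewOfUpper, transpose_apply, of_apply, neg_apply]
  split_ifs with h₁ h₂ h₂
  · exact absurd h₂ (hs _ h₁)
  · rw [neg_neg]
  · rfl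
  · rw [neg_zero]

end AddGroup

section CommRing

variable {ι R : Type*} [Fintype ι] [DecidableEq ι] [CommRing R]

def skewInvariant (g : Matrix ι ι R) : Submodule R (Matrix ι ι R) where
  carrier := {X | Xᵀ = -X ∧ g * X * gᵀ = X}
  zero_mem' := by simp
  add_mem' := by
    rintro X Y ⟨hX, hgX⟩ ⟨hY, hgY⟩
    exact ⟨by rw [transpose_add, hX, hY, neg_add],
      by rw [Matrix.mul_add, Matrix.add_mul, hgX, hgY]⟩
  smul_mem' := by
    rintro c X ⟨hX, hgX⟩
    exact ⟨by rw [transpose_smul, hX, smul_neg], by rw [Matrix.mul_smul, Matrix.smul_mul, hgX]⟩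

theorem mem_skewInvariant {g X : Matrix ι ι R} :
    X ∈ skewInvariant g ↔ Xᵀ = -X ∧ g * X * gᵀ = X := Iff.rfl

def unitsCongr (P : (Matrix ι ι R)ˣ) : Matrix ι ι R ≃ₗ[R] Matrix ι ι R where
  toFun X := P * X * (P : Matrix ι ι R)ᵀ
  invFun X := ↑P⁻¹ * X * (↑P⁻¹ : Matrix ι ι R)ᵀ
  map_add' X Y := by simp [Matrix.mul_add, Matrix.add_mul]
  map_smul' c X := by simp
  left_inv X := by simp [Matrix.mul_assoc, ← transpose_mul]
  right_inv X := by simp [Matrix.mul_assoc, ← transpose_mul]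

theorem skewInvariant_units_conj (P : (Matrix ι ι R)ˣ) (g : Matrix ι ι R) :
    skewInvariant (P * g * P⁻¹ : Matrix ι ι R) =
      (skewInvariant g).map (unitsCongr P : Matrix ι ι R →ₗ[R] Matrix ι ι R) := by
  ext X
  obtain ⟨Y, rfl⟩ := (unitsCongr P).surjective X
  rw [Submodule.mem_map_equiv, LinearEquiv.symm_apply_apply, mem_skewInvariant,
    mem_skewInvariant]
  have htranspose : (unitsCongr P Y)ᵀ = unitsCongr P Yᵀ := by
    simp [unitsCongr, Matrix.mul_assoc]
  have hconj : (P * g * P⁻¹ : Matrix ι ι R) * unitsCongr P Y * (P * g * P⁻¹ : Matrix ι ι R)ᵀ =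
      unitsCongr P (g * Y * gᵀ) := by
    simp [unitsCongr, Matrix.mul_assoc, ← transpose_mul]
  rw [htranspose, hconj, ← map_neg, (unitsCongr P).injective.eq_iff,
    (unitsCongr P).injective.eq_iff]

end CommRing

section Field

variable {ι K : Type*} [Fintype ι] [DecidableEq ι] [Field K]

theorem exists_eq_units_conj_diagonal [IsAlgClosed K] {t : Matrix ι ι K}
    (ht : Module.End.IsSemisimple (toLin' t)) :
    ∃ (P : (Matrix ι ι K)ˣ) (d : ι → K), t = P * diagonal d * P⁻¹ := by
  obtain ⟨b, d, hb⟩ := Module.End.exists_basis_eigenvectors (ι := ι) (by simp) ht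
  let e := Pi.basisFun K ι
  have hdiag : LinearMap.toMatrix b b (toLin' t) = diagonal d := by
    ext i j
    rw [LinearMap.toMatrix_apply, hb, map_smul, b.repr_self]
    rcases eq_or_ne i j with rfl | hij
    · simp
    · simp [hij]
  refine ⟨⟨e.toMatrix b, b.toMatrix e, e.toMatrix_mul_toMatrix_flip b,
    b.toMatrix_mul_toMatrix_flip e⟩, d, ?_⟩
  change t = e.toMatrix b * diagonal d * b.toMatrix e
  rw [← hdiag, basis_toMatrix_mul_linearMap_toMatrix_mul_basis_toMatrix,
    LinearMap.toMatrix_eq_toMatrix', LinearMap.toMatrix'_toLin']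

theorem finrank_ker_toLin'_add_rank (A : Matrix ι ι K) :
    finrank K (LinearMap.ker (toLin' A)) + A.rank = Fintype.card ι := by
  rw [add_comm, rank, ← toLin'_apply', LinearMap.finrank_range_add_finrank_ker, finrank_pi]

theorem rank_units_conj (P : (Matrix ι ι K)ˣ) (A : Matrix ι ι K) :
    (P * A * P⁻¹ : Matrix ι ι K).rank = A.rank := by
  rw [rank_mul_eq_left_of_isUnit_det _ _ (isUnit_det_of_invertible _),
    rank_mul_eq_right_of_isUnit_det _ _ (isUnit_det_of_invertible _)]

theorem finrank_ker_toLin'_units_conj (P : (Matrix ι ι K)ˣ) (A : Matrix ι ι K) :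
    finrank K (LinearMap.ker (toLin' (P * A * P⁻¹ : Matrix ι ι K))) =
      finrank K (LinearMap.ker (toLin' A)) := by
  have h₁ := finrank_ker_toLin'_add_rank (P * A * P⁻¹ : Matrix ι ι K)
  have h₂ := finrank_ker_toLin'_add_rank A
  rw [rank_units_conj] at h₁
  omega

theorem finrank_ker_toLin'_diagonal [DecidableEq K] (w : ι → K) :
    finrank K (LinearMap.ker (toLin' (diagonal w))) = #{i | w i = 0} := by
  have h₁ := finrank_ker_toLin'_add_rank (diagonal w)
  have h₂ := card_filter_add_card_filter_not (s := univ) (fun i ↦ w i = 0)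
  simp only [rank_diagonal, Fintype.card_subtype, ne_eq] at h₁
  rw [card_univ] at h₂
  omega

theorem rank_sub_inv_smul_one {t : Matrix ι ι K} (ht : tᵀ * t = 1) (μ : K) :
    (t - μ⁻¹ • 1).rank = (t - μ • 1).rank := by
  rcases eq_or_ne μ 0 with rfl | hμ
  · simp
  have htranspose : (t - μ • 1)ᵀ = (-μ) • (tᵀ * (t - μ⁻¹ • 1)) := by
    rw [Matrix.mul_sub, ht, Matrix.mul_smul, Matrix.mul_one, smul_sub, smul_smul, neg_mul,
      mul_inv_cancel₀ hμ, transpose_sub, transpose_smul, transpose_one]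
    module
  rw [← rank_transpose (t - μ • 1), htranspose,
    rank_smul_of_mem_nonZeroDivisors _ (mem_nonZeroDivisors_of_ne_zero (neg_ne_zero.mpr hμ)),
    rank_mul_eq_right_of_isUnit_det _ _ (isUnit_det_of_right_inverse ht)]

theorem roots_charpoly_units_conj_diagonal [DecidableEq K] (P : (Matrix ι ι K)ˣ) (d : ι → K) :
    (P * diagonal d * P⁻¹ : Matrix ι ι K).charpoly.roots.toFinset = univ.image d := by
  ext μ
  rw [coe_units_inv, charpoly_units_conj, Multiset.mem_toFinset,
    mem_roots (charpoly_monic _).ne_zero, charpoly_diagonal]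
  simp [eval_prod, prod_eq_zero_iff, sub_eq_zero, eq_comm (a := μ)]

theorem mem_skewInvariant_diagonal {d : ι → K} {Z : Matrix ι ι K} :
    Z ∈ skewInvariant (diagonal d) ↔ Zᵀ = -Z ∧ ∀ i j, d i * d j ≠ 1 → Z i j = 0 := by
  rw [mem_skewInvariant, diagonal_transpose, ← Matrix.ext_iff (M := diagonal d * Z * diagonal d)]
  simp only [mul_diagonal, diagonal_mul, mul_right_comm _ _ (d _), mul_left_eq_self₀,
    or_iff_not_imp_left]

theorem finrank_skewInvariant_diagonal [LinearOrder ι] [DecidableEq K] (hK : ringChar K ≠ 2)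
    (d : ι → K) :
    finrank K (skewInvariant (diagonal d)) = #{p : ι × ι | p.1 < p.2 ∧ d p.1 * d p.2 = 1} := by
  set s : Finset (ι × ι) := {p : ι × ι | p.1 < p.2 ∧ d p.1 * d p.2 = 1}
  have hs : ∀ {i j}, (i, j) ∈ s ↔ i < j ∧ d i * d j = 1 := by simp [s]
  let e : skewInvariant (diagonal d) ≃ₗ[K] (s → K) :=
    { toFun Z p := (Z : Matrix ι ι K) p.1.1 p.1.2
      map_add' _ _ := rfl
      map_smul' _ _ := rfl
      invFun f := ⟨skewOfUpper s f, mem_skewInvariant_diagonal.mpr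
        ⟨transpose_skewOfUpper (fun _ h h' ↦ lt_asymm (hs.mp h).1 (hs.mp h').1) f,
          fun i j hij ↦ skewOfUpper_apply_of_not_mem f (fun h ↦ hij (hs.mp h).2)
            (fun h ↦ hij ((mul_comm _ _).trans (hs.mp h).2))⟩⟩
      left_inv Z := by
        obtain ⟨Z, hZ⟩ := Z
        obtain ⟨hskew, hsupp⟩ := mem_skewInvariant_diagonal.mp hZ
        ext i j
        simp only [skewOfUpper, of_apply]
        split_ifs with h₁ h₂
        · rfl
        · simpa using (congr_fun₂ hskew j i).symm
        · symm
          by_cases h1 : d i * d j = 1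
          · rcases lt_trichotomy i j with hlt | rfl | hgt
            · exact absurd (hs.mpr ⟨hlt, h1⟩) h₁
            · exact (Ring.eq_self_iff_eq_zero_of_char_ne_two hK).mp
                (by simpa using (congr_fun₂ hskew i i).symm)
            · exact absurd (hs.mpr ⟨hgt, (mul_comm _ _).trans h1⟩) h₂
          · exact hsupp i j h1
      right_inv f := funext fun p ↦ skewOfUpper_apply_of_mem f p.2 }
  rw [e.finrank_eq, finrank_fintype_fun_eq_card, Fintype.card_coe]

end Field

end Matrix

section Counting

variable {ι : Type*} [Fintype ι]

theorem two_mul_card_lt_add_card_diag [LinearOrder ι] (R : ι → ι → Prop) [DecidableRel R]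
    (hR : ∀ i j, R i j → R j i) :
    2 * #{p : ι × ι | p.1 < p.2 ∧ R p.1 p.2} + #{i | R i i} = #{p : ι × ι | R p.1 p.2} := by
  have hswap : #{p : ι × ι | p.2 < p.1 ∧ R p.1 p.2} = #{p : ι × ι | p.1 < p.2 ∧ R p.1 p.2} :=
    card_equiv (Equiv.prodComm ι ι) fun p ↦ by simp [(⟨hR _ _, hR _ _⟩ : R p.1 p.2 ↔ R p.2 p.1)]
  have hdiag : #{p : ι × ι | p.1 = p.2 ∧ R p.1 p.2} = #{i | R i i} :=
    card_nbij' Prod.fst (fun i ↦ (i, i)) (by intro p; aesop) (by intro i; simp)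
      (by intro p; aesop) (by intro i; simp)
  have hsplit : univ.filter (fun p : ι × ι ↦ R p.1 p.2) =
      (univ.filter (fun p : ι × ι ↦ p.1 < p.2 ∧ R p.1 p.2) ∪
        univ.filter (fun p : ι × ι ↦ p.2 < p.1 ∧ R p.1 p.2)) ∪
        univ.filter (fun p : ι × ι ↦ p.1 = p.2 ∧ R p.1 p.2) := by
    ext ⟨i, j⟩
    have := lt_trichotomy i j
    simp only [mem_filter, mem_univ, true_and, mem_union]
    tauto
  rw [hsplit, card_union_of_disjoint, card_union_of_disjoint, hswap, hdiag]
  · ring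
  · exact disjoint_filter.2 fun p _ h h' ↦ lt_asymm h.1 h'.1
  · exact disjoint_union_left.2 ⟨disjoint_filter.2 fun p _ h h' ↦ h.1.ne h'.1,
      disjoint_filter.2 fun p _ h h' ↦ h.1.ne' h'.1⟩

variable {K : Type*} [Field K] [DecidableEq K]

theorem card_mul_eq_one_eq_sum_sq {d : ι → K} (hd : ∀ i, d i ≠ 0)
    (hinv : ∀ μ, #{i | d i = μ⁻¹} = #{i | d i = μ}) :
    #{p : ι × ι | d p.1 * d p.2 = 1} = ∑ μ ∈ univ.image d, #{i | d i = μ} ^ 2 :=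
  calc #{p : ι × ι | d p.1 * d p.2 = 1}
      = ∑ i, #{j | d j = (d i)⁻¹} := by
        rw [card_filter, Fintype.sum_prod_type]
        refine sum_congr rfl fun i _ ↦ ?_
        rw [card_filter]
        simp only [mul_eq_one_iff_inv_eq₀ (hd i), eq_comm]
    _ = ∑ i, #{j | d j = d i} := by simp_rw [hinv]
    _ = ∑ μ ∈ univ.image d, #{i | d i = μ} ^ 2 := by
        rw [sum_comp (fun μ ↦ #{j | d j = μ}) d]
        simp [sq]

theorem card_mul_self_eq_one [DecidableEq ι] {d : ι → K} (hK : ringChar K ≠ 2) :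
    #{i | d i * d i = 1} = #{i | d i = 1} + #{i | d i = -1} := by
  rw [← card_union_of_disjoint, ← filter_or]
  · simp_rw [mul_self_eq_one_iff]
  · exact disjoint_filter.2 fun i _ h h' ↦ Ring.neg_one_ne_one_of_char_ne_two hK (h' ▸ h)

theorem cast_card_lt_mul_eq_one [LinearOrder ι] (hK : ringChar K ≠ 2)
    {d : ι → K} (hd : ∀ i, d i ≠ 0) (hinv : ∀ μ, #{i | d i = μ⁻¹} = #{i | d i = μ}) :
    (#{p : ι × ι | p.1 < p.2 ∧ d p.1 * d p.2 = 1} : ℚ) =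
      (#{i | d i = 1}).choose 2 + (#{i | d i = -1}).choose 2 +
        1 / 2 * ∑ μ ∈ univ.image d \ {1, -1}, (#{i | d i = μ} : ℚ) ^ 2 := by
  set m : K → ℕ := fun μ ↦ #{i | d i = μ}
  have hcount := two_mul_card_lt_add_card_diag (fun i j ↦ d i * d j = 1)
    fun i j h ↦ (mul_comm _ _).trans h
  rw [card_mul_self_eq_one hK, card_mul_eq_one_eq_sum_sq hd hinv] at hcount
  have hsplit : ∑ μ ∈ univ.image d, m μ ^ 2 =
      ∑ μ ∈ univ.image d \ {1, -1}, m μ ^ 2 + (m 1 ^ 2 + m (-1) ^ 2) := by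
    rw [← sum_pair (f := fun μ ↦ m μ ^ 2) (Ring.neg_one_ne_one_of_char_ne_two hK).symm,
      ← union_sdiff_right, sum_sdiff subset_union_right]
    exact sum_subset subset_union_left fun μ _ hμ ↦ by simpa [m] using hμ
  rw [Nat.cast_choose_two, Nat.cast_choose_two]
  have := congrArg (Nat.cast : ℕ → ℚ) (hcount.trans hsplit)
  push_cast at this
  linarith

end Counting

theorem eigMult_add_rank {n : ℕ} (t : Matrix (Fin n) (Fin n) ℂ) (μ : ℂ) :
    eigMult n t μ + (t - μ • 1).rank = n := by
  have h := finrank_ker_toLin'_add_rank (t - μ • 1)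
  rw [Fintype.card_fin] at h
  exact h

theorem eigMult_inv {n : ℕ} {t : Matrix (Fin n) (Fin n) ℂ} (hto : tᵀ * t = 1) (μ : ℂ) :
    eigMult n t μ⁻¹ = eigMult n t μ := by
  have h₁ := eigMult_add_rank t μ
  have h₂ := eigMult_add_rank t μ⁻¹
  rw [rank_sub_inv_smul_one hto] at h₂
  omega

theorem eigMult_units_conj_diagonal {n : ℕ} (P : (Matrix (Fin n) (Fin n) ℂ)ˣ) (d : Fin n → ℂ)
    (μ : ℂ) :
    eigMult n (P * diagonal d * P⁻¹) μ = #{i | d i = μ} := by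
  have hshift : (P * diagonal d * P⁻¹ : Matrix (Fin n) (Fin n) ℂ) - μ • 1 =
      P * diagonal (fun i ↦ d i - μ) * P⁻¹ := by
    rw [← diagonal_sub, ← smul_one_eq_diagonal, Matrix.mul_sub, Matrix.sub_mul, Matrix.mul_smul,
      Matrix.mul_one, Matrix.smul_mul, Units.mul_inv]
  rw [eigMult, hshift, finrank_ker_toLin'_units_conj, finrank_ker_toLin'_diagonal]
  simp only [sub_eq_zero]

theorem skewCommuting_eq_skewInvariant {n : ℕ} {t : Matrix (Fin n) (Fin n) ℂ}
    (hto : tᵀ * t = 1) :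
    skewCommuting n t = skewInvariant t := by
  have htt : t * tᵀ = 1 := mul_eq_one_comm.mp hto
  ext X
  refine and_congr_right' ⟨fun h ↦ by rw [h, Matrix.mul_assoc, htt, Matrix.mul_one], fun h ↦ ?_⟩
  calc t * X = t * X * tᵀ * t := by rw [Matrix.mul_assoc _ tᵀ, hto, Matrix.mul_one]
    _ = X * t := by rw [h]

theorem finrank_skewCommuting_general (n : ℕ) (t : Matrix (Fin n) (Fin n) ℂ)
    (hto : tᵀ * t = 1) (k : ℕ) (hk : 1 ≤ k) (htk : t ^ k = 1) :
    (finrank ℂ (skewCommuting n t) : ℚ) =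
      (eigMult n t 1).choose 2 + (eigMult n t (-1)).choose 2 +
        (1 / 2) * ∑ lam ∈ t.charpoly.roots.toFinset \ {1, -1}, (eigMult n t lam : ℚ) ^ 2 := by
  have hss : Module.End.IsSemisimple (toLin' t) :=
    Module.End.isSemisimple_of_pow_eq_one (k := k) (by exact_mod_cast (by omega : k ≠ 0))
      (by rw [← toLin'_pow, htk, toLin'_one, End.one_eq_id])
  obtain ⟨P, d, rfl⟩ := exists_eq_units_conj_diagonal hss
  have hd : ∀ i, d i ≠ 0 := by
    have hdet := det_ne_zero_of_left_inverse hto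
    rw [det_units_conj, det_diagonal, prod_ne_zero_iff] at hdet
    exact fun i ↦ hdet i (mem_univ i)
  have hmult := eigMult_units_conj_diagonal P d
  rw [skewCommuting_eq_skewInvariant hto, skewInvariant_units_conj, LinearEquiv.finrank_map_eq,
    finrank_skewInvariant_diagonal (by simp), roots_charpoly_units_conj_diagonal]
  simp_rw [hmult]
  exact cast_card_lt_mul_eq_one (by simp) hd
    fun μ ↦ by rw [← hmult, ← hmult, eigMult_inv hto]

/-- If `t ∈ SO_n(ℂ)` has finite order, then the dimension of the space of skew-symmetric
matrices commuting with `t` is `C(m₁,2) + C(m₋₁,2) + (1/2)·∑_{λ ≠ ±1} m_λ²`, where `m_λ` is the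
multiplicity of the eigenvalue `λ` of `t` and the sum runs over the eigenvalues (roots of the
characteristic polynomial) of `t` different from `1` and `-1`. -/
theorem finrank_skewCommuting (n : ℕ) (hn : 1 ≤ n) (t : Matrix (Fin n) (Fin n) ℂ)
    (hto : tᵀ * t = 1) (htd : t.det = 1) (k : ℕ) (hk : 1 ≤ k) (htk : t ^ k = 1) :
    (finrank ℂ (skewCommuting n t) : ℚ) =
      (eigMult n t 1).choose 2 + (eigMult n t (-1)).choose 2 +
        (1 / 2) * ∑ lam ∈ t.charpoly.roots.toFinset \ {1, -1}, (eigMult n t lam : ℚ) ^ 2 :=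
  finrank_skewCommuting_general n t hto k hk htk
end

section
/- Let r ≥ 4 and 1 ≤ k ≤ ⌊r/2⌋ be integers. Let z ∈ SO_{2r}(ℂ) (i.e. zᵀz = I and det z = 1) be such that z commutes with every block-diagonal matrix diag(h₁, h₂) where h₁ ∈ SO_{2k+1}(ℂ) and h₂ ∈ SO_{2r−2k−1}(ℂ). Then z = I or z = −I. -/
/-!
Write `z` in blocks `[[A, B], [C, D]]`. Commuting with `diag(g, 1)` and `diag(1, g)` makes `A`
and `D` commute with all of `SO_{2k+1}` resp. `SO_{2r-2k-1}`, and gives `g B = B`, `C g = C`.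
Sign changes `diag(±1)` with an even number of `-1`s lie in `SO_m`; since `m ≥ 3`, they force
`B = C = 0` and make `A`, `D` diagonal, and quarter turns in coordinate planes then force
`A = a • 1`, `D = d • 1`. Orthogonality gives `a² = d² = 1`, and
as both block sizes are odd, `det z = a d = 1`, so `a = d = ±1`.
-/

open Matrix

lemma neg_one_ne_one {R : Type*} [Ring R] [NeZero (2 : R)] : (-1 : R) ≠ 1 :=
  fun h => two_ne_zero (one_add_one_eq_two (R := R) ▸ neg_eq_iff_add_eq_zero.mp h)

lemma Odd.pow_eq_self_of_mul_self_eq_one {M : Type*} [Monoid M] {a : M} (ha : a * a = 1)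
    {k : ℕ} (hk : Odd k) : a ^ k = a := by
  obtain ⟨j, rfl⟩ := hk
  rw [pow_succ, pow_mul, sq, ha, one_pow, one_mul]

namespace Matrix

variable {m n R : Type*} [DecidableEq n] [CommRing R]

def IsSpecialOrthogonal [Fintype n] (g : Matrix n n R) : Prop := gᵀ * g = 1 ∧ g.det = 1

def signFlip (s : Finset n) : n → R := fun t => if t ∈ s then -1 else 1

lemma signFlip_mul_self (s : Finset n) (t : n) : (signFlip s t : R) * signFlip s t = 1 := by
  by_cases ht : t ∈ s <;> simp [signFlip, ht]

section SpecialOrthogonal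

variable [Fintype n]

lemma isSpecialOrthogonal_one : IsSpecialOrthogonal (1 : Matrix n n R) :=
  ⟨by rw [transpose_one, one_mul], det_one⟩

lemma IsSpecialOrthogonal.transpose {g : Matrix n n R} (hg : IsSpecialOrthogonal g) :
    IsSpecialOrthogonal gᵀ :=
  ⟨by rw [transpose_transpose]; exact mul_eq_one_comm.mp hg.1, by rw [det_transpose]; exact hg.2⟩

lemma isSpecialOrthogonal_diagonal_signFlip {s : Finset n} (hs : Even s.card) :
    IsSpecialOrthogonal (diagonal (signFlip s : n → R)) := by
  refine ⟨?_, ?_⟩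
  · rw [diagonal_transpose, diagonal_mul_diagonal]
    simp only [signFlip_mul_self, diagonal_one]
  · simp only [det_diagonal, signFlip, Finset.prod_ite_mem, Finset.univ_inter, Finset.prod_const,
      hs.neg_one_pow]

lemma isSpecialOrthogonal_diagonal_signFlip_pair {i j : n} (hij : i ≠ j) :
    IsSpecialOrthogonal (diagonal (signFlip {i, j} : n → R)) :=
  isSpecialOrthogonal_diagonal_signFlip (by rw [Finset.card_pair hij]; exact even_two)

/-- The quarter turn `e_i ↦ e_j ↦ -e_i` of the `(i, j)`-plane. -/
lemma isSpecialOrthogonal_diagonal_signFlip_mul_swap {i j : n} (hij : i ≠ j) :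
    IsSpecialOrthogonal (diagonal (signFlip {i} : n → R) * (Equiv.swap i j).permMatrix R) := by
  refine ⟨?_, ?_⟩
  · rw [transpose_mul, transpose_permMatrix, diagonal_transpose, mul_assoc,
      ← mul_assoc (diagonal _), diagonal_mul_diagonal]
    simp only [signFlip_mul_self, diagonal_one, one_mul, ← permMatrix_mul, mul_inv_cancel,
      permMatrix_one]
  · rw [det_mul, det_diagonal, det_permutation, Equiv.Perm.sign_swap hij]
    simp [signFlip]

end SpecialOrthogonal

section NoZeroDivisors

variable [Fintype n] [NoZeroDivisors R]

lemma apply_eq_zero_of_commute_diagonal {A : Matrix n n R} {d : n → R}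
    (h : Commute A (diagonal d)) {i j : n} (hd : d i ≠ d j) : A i j = 0 := by
  have hij := congrFun₂ h.eq i j
  simp only [mul_diagonal, diagonal_mul] at hij
  exact (mul_eq_zero.mp (by linear_combination hij : A i j * (d j - d i) = 0)).resolve_right
    (sub_ne_zero.mpr hd.symm)

lemma apply_eq_of_commute_diagonal {a : n → R} {g : Matrix n n R}
    (h : Commute (diagonal a) g) {i j : n} (hg : g i j ≠ 0) : a i = a j := by
  have hij := congrFun₂ h.eq i j
  simp only [mul_diagonal, diagonal_mul] at hij
  exact sub_eq_zero.mp <| (mul_eq_zero.mp (by linear_combination hij :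
    (a i - a j) * g i j = 0)).resolve_right hg

lemma apply_eq_zero_of_diagonal_mul_eq_self {B : Matrix n m R} {d : n → R}
    (h : diagonal d * B = B) {i : n} (hd : d i ≠ 1) (v : m) : B i v = 0 := by
  have hiv := congrFun₂ h i v
  simp only [diagonal_mul] at hiv
  exact (mul_eq_zero.mp (by linear_combination hiv : (d i - 1) * B i v = 0)).resolve_left
    (sub_ne_zero.mpr hd)

variable [NeZero (2 : R)]

lemma mem_range_scalar_of_forall_commute (hn : 3 ≤ Fintype.card n) {A : Matrix n n R}
    (hA : ∀ g : Matrix n n R, IsSpecialOrthogonal g → Commute A g) :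
    A ∈ Set.range (scalar n) := by
  have hdiag : A = diagonal fun i => A i i := by
    ext i j
    rcases eq_or_ne i j with rfl | hij
    · simp
    obtain ⟨l, hli, hlj⟩ := ENat.exists_ne_ne_of_three_le (by simpa using hn) i j
    rw [diagonal_apply_ne _ hij]
    refine apply_eq_zero_of_commute_diagonal
      (hA _ (isSpecialOrthogonal_diagonal_signFlip_pair hli.symm)) ?_
    simp [signFlip, hij.symm, hlj.symm, neg_one_ne_one]
  obtain ⟨i₀⟩ : Nonempty n := Fintype.card_pos_iff.mp (by omega)
  refine ⟨A i₀ i₀, ?_⟩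
  conv_rhs => rw [hdiag]
  rw [scalar_apply]
  congr 1
  funext i
  rcases eq_or_ne i₀ i with rfl | hi
  · rfl
  refine apply_eq_of_commute_diagonal
    (hdiag ▸ hA _ (isSpecialOrthogonal_diagonal_signFlip_mul_swap hi)) ?_
  have : Nontrivial R := nontrivial_of_ne 2 0 two_ne_zero
  simp [signFlip]

lemma eq_zero_of_forall_mul_eq_self_left (hn : 2 ≤ Fintype.card n) {B : Matrix n m R}
    (hB : ∀ g : Matrix n n R, IsSpecialOrthogonal g → g * B = B) : B = 0 := by
  have : Nontrivial n := Fintype.one_lt_card_iff_nontrivial.mp hn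
  ext i v
  obtain ⟨l, hli⟩ := exists_ne i
  exact apply_eq_zero_of_diagonal_mul_eq_self
    (hB _ (isSpecialOrthogonal_diagonal_signFlip_pair hli.symm))
    (by simp [signFlip, neg_one_ne_one]) v

lemma eq_zero_of_forall_mul_eq_self_right (hn : 2 ≤ Fintype.card n) {C : Matrix m n R}
    (hC : ∀ g : Matrix n n R, IsSpecialOrthogonal g → C * g = C) : C = 0 :=
  transpose_eq_zero.mp <| eq_zero_of_forall_mul_eq_self_left hn fun g hg => by
    rw [← transpose_transpose g, ← transpose_mul, hC _ hg.transpose]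

end NoZeroDivisors

lemma eq_one_or_neg_one_of_eq_fromBlocks_scalar [Fintype m] [DecidableEq m] [Fintype n]
    [NoZeroDivisors R] (hm : Odd (Fintype.card m)) (hn : Odd (Fintype.card n))
    {z : Matrix (m ⊕ n) (m ⊕ n) R} {a d : R} (hz : IsSpecialOrthogonal z)
    (hblocks : z = fromBlocks (scalar m a) 0 0 (scalar n d)) :
    z = 1 ∨ z = -1 := by
  rw [scalar_apply, scalar_apply, fromBlocks_diagonal] at hblocks
  subst hblocks
  set e := Sum.elim (fun _ : m => a) fun _ : n => d
  have hsq (t : m ⊕ n) : e t * e t = 1 := by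
    simpa using congrFun₂ hz.1 t t
  obtain ⟨i⟩ : Nonempty m := Fintype.card_pos_iff.mp hm.pos
  obtain ⟨j⟩ : Nonempty n := Fintype.card_pos_iff.mp hn.pos
  have ha : a * a = 1 := hsq (.inl i)
  have hd : d * d = 1 := hsq (.inr j)
  have had : a * d = 1 := by
    have hdet := hz.2
    rw [det_diagonal, Fintype.prod_sum_type] at hdet
    simpa only [e, Sum.elim_inl, Sum.elim_inr, Finset.prod_const, Finset.card_univ,
      hm.pow_eq_self_of_mul_self_eq_one ha, hn.pow_eq_self_of_mul_self_eq_one hd] using hdet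
  obtain rfl : d = a := by linear_combination a * had - d * ha
  rcases mul_self_eq_one_iff.mp ha with rfl | rfl
  · left
    simp [e, diagonal_one]
  · right
    simp only [e, Sum.elim_lam_const_lam_const]
    rw [← diagonal_one, ← diagonal_neg]

lemma commute_fromBlocks_iff {l m α : Type*} [Fintype l] [Fintype m] [Semiring α]
    (A : Matrix l l α) (B : Matrix l m α) (C : Matrix m l α) (D : Matrix m m α)
    (g₁ : Matrix l l α) (g₂ : Matrix m m α) :
    Commute (fromBlocks A B C D) (fromBlocks g₁ 0 0 g₂) ↔
      Commute A g₁ ∧ B * g₂ = g₁ * B ∧ C * g₁ = g₂ * C ∧ Commute D g₂ := by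
  simp only [Commute, SemiconjBy, fromBlocks_multiply, Matrix.mul_zero, Matrix.zero_mul,
    add_zero, zero_add, fromBlocks_inj]

end Matrix

/-- If `z ∈ SO_{2r}(ℂ)` commutes with every block-diagonal matrix `diag(h₁, h₂)` with
`h₁ ∈ SO_{2k+1}(ℂ)` and `h₂ ∈ SO_{2r−2k−1}(ℂ)` (where `r ≥ 4` and `1 ≤ k ≤ ⌊r/2⌋`, and the
`2r` indices are split as `(2k+1) + (2r−2k−1)`), then `z = I` or `z = −I`. -/
theorem centralizer_blockDiag_SO (r k : ℕ) (hr : 4 ≤ r) (hk1 : 1 ≤ k) (hk2 : k ≤ r / 2)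
    (z : Matrix (Fin (2 * k + 1) ⊕ Fin (2 * r - 2 * k - 1))
        (Fin (2 * k + 1) ⊕ Fin (2 * r - 2 * k - 1)) ℂ)
    (hzo : zᵀ * z = 1) (hzd : z.det = 1)
    (hcomm : ∀ (h₁ : Matrix (Fin (2 * k + 1)) (Fin (2 * k + 1)) ℂ)
        (h₂ : Matrix (Fin (2 * r - 2 * k - 1)) (Fin (2 * r - 2 * k - 1)) ℂ),
        h₁ᵀ * h₁ = 1 → h₁.det = 1 → h₂ᵀ * h₂ = 1 → h₂.det = 1 →
        z * Matrix.fromBlocks h₁ 0 0 h₂ = Matrix.fromBlocks h₁ 0 0 h₂ * z) :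
    z = 1 ∨ z = -1 := by
  have hm : 3 ≤ Fintype.card (Fin (2 * k + 1)) := by rw [Fintype.card_fin]; omega
  have hn : 3 ≤ Fintype.card (Fin (2 * r - 2 * k - 1)) := by rw [Fintype.card_fin]; omega
  have hblocks g₁ g₂ (h₁ : IsSpecialOrthogonal g₁) (h₂ : IsSpecialOrthogonal g₂) :=
    (commute_fromBlocks_iff z.toBlocks₁₁ z.toBlocks₁₂ z.toBlocks₂₁ z.toBlocks₂₂ g₁ g₂).mp
      (by rw [fromBlocks_toBlocks]; exact hcomm g₁ g₂ h₁.1 h₁.2 h₂.1 h₂.2)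
  obtain ⟨a, ha⟩ := mem_range_scalar_of_forall_commute hm fun g hg =>
    (hblocks g 1 hg isSpecialOrthogonal_one).1
  obtain ⟨d, hd⟩ := mem_range_scalar_of_forall_commute hn fun g hg =>
    (hblocks 1 g isSpecialOrthogonal_one hg).2.2.2
  have hB : z.toBlocks₁₂ = 0 := eq_zero_of_forall_mul_eq_self_left (by omega) fun g hg => by
    simpa using (hblocks g 1 hg isSpecialOrthogonal_one).2.1.symm
  have hC : z.toBlocks₂₁ = 0 := eq_zero_of_forall_mul_eq_self_right (by omega) fun g hg => by
    simpa using (hblocks g 1 hg isSpecialOrthogonal_one).2.2.1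
  refine eq_one_or_neg_one_of_eq_fromBlocks_scalar (a := a) (d := d) (by simp) ?_ ⟨hzo, hzd⟩ ?_
  · rw [Fintype.card_fin]; exact ⟨r - k - 1, by omega⟩
  · rw [← fromBlocks_toBlocks z, ← ha, ← hd, hB, hC]
end

section
/- The alternating group Alt_11 is not (a,b,c)-generated for any of the following triples: (2,3,c) with c ≥ 7 and c not divisible by 11; (2,4,5); and (3,3,4). That is, for each such triple (a,b,c) there do not exist permutations x, y ∈ Alt_11 with x^a = y^b = (xy)^c = 1 which generate Alt_11; equivalently, Alt_11 is not a quotient of the triangle group T_{a,b,c} for these triples. -/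
/-!
Scott's theorem: if `x, y` generate a transitive group of permutations of `n` points and
`d g = n - #(orbits of ⟨g⟩) = Σ (ℓ - 1)` over the cycle lengths `ℓ` of `g`, then
`d x + d y + d (x * y) ≥ 2 (n - 1)`. In the permutation module `K^n`, `d g` is the rank of `g - 1`.
For any two endomorphisms,
`dim ker (f g - 1) ≤ dim (ker (f - 1) ∩ ker (g - 1)) + dim (im (f - 1) ∩ im (g - 1))`;
transitivity makes the first term at most `1` and `im (x - 1) + im (y - 1)` of codimension at
most `1`, which yields Scott's bound.

In `Alt_11` an involution has `d ≤ 4`, elements of order dividing `3`, `4`, `5` have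
`d ≤ 6`, `7`, `8`, and an even permutation of order prime to `11` has `d ≤ 8`. For each of the
triples the sum is at most `19 < 20`.
-/

/-- `Alt_m` is `(a,b,c)`-generated: there exist `x, y ∈ Alt_m` with
`x^a = y^b = (xy)^c = 1` generating the alternating group; equivalently `Alt_m` is a
quotient of the triangle group `T_{a,b,c}`. -/
def AltIsGenerated (m a b c : ℕ) : Prop :=
  ∃ x y : Equiv.Perm (Fin m),
    x ∈ alternatingGroup (Fin m) ∧ y ∈ alternatingGroup (Fin m) ∧
    x ^ a = 1 ∧ y ^ b = 1 ∧ (x * y) ^ c = 1 ∧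
    Subgroup.closure {x, y} = alternatingGroup (Fin m)

open Module LinearMap Equiv Equiv.Perm

theorem Equiv.Perm.card_cycleType_add_le_natCard_quotient_sameCycle {α : Type*} [Fintype α]
    [DecidableEq α] (σ : Perm α) :
    Multiset.card σ.cycleType + (Fintype.card α - σ.cycleType.sum) ≤
      Nat.card (Quotient (SameCycle.setoid σ)) := by
  have hpt (c : σ.cycleFactorsFinset) : (c : Perm α).support.Nonempty :=
    (mem_cycleFactorsFinset_iff.mp c.2).1.nonempty_support
  choose pt hpt using hpt
  have hpt_mem (c : σ.cycleFactorsFinset) : σ (pt c) ≠ pt c :=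
    mem_support.mp (mem_cycleFactorsFinset_support_le c.2 (hpt c))
  let ι : Function.fixedPoints σ ⊕ σ.cycleFactorsFinset → Quotient (SameCycle.setoid σ) :=
    Sum.elim (fun i => ⟦i⟧) (fun c => ⟦pt c⟧)
  have hι : Function.Injective ι := by
    rintro (i | c) (j | d) h <;> have h := Quotient.exact h
    · exact congrArg Sum.inl (Subtype.ext (SameCycle.eq_of_left h i.2))
    · exact absurd (SameCycle.eq_of_left h i.2 ▸ i.2) (hpt_mem d)
    · exact absurd (SameCycle.eq_of_left h.symm j.2 ▸ j.2) (hpt_mem c)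
    · refine congrArg Sum.inr (Subtype.ext ?_)
      rw [cycle_is_cycleOf (hpt c) c.2, cycle_is_cycleOf (hpt d) d.2]
      exact SameCycle.cycleOf_eq h
  have hcard : Multiset.card σ.cycleType = σ.cycleFactorsFinset.card := by
    rw [cycleType_def, Multiset.card_map, Finset.card_val]
  have := Nat.card_le_card_of_injective ι hι
  rwa [Nat.card_sum, Nat.card_eq_fintype_card, card_fixedPoints, Nat.card_eq_fintype_card,
    Fintype.card_coe, ← hcard, add_comm] at this

/- On `ker (f g - 1)` we have `(g - 1) v = (f - 1) (-g v)`, so `g - 1` maps it into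
`range (f - 1) ⊓ range (g - 1)`, with kernel inside `ker (f - 1) ⊓ ker (g - 1)`. -/
theorem LinearMap.finrank_ker_mul_sub_one_le {K V : Type*} [DivisionRing K] [AddCommGroup V] [Module K V]
    [FiniteDimensional K V] (f g : Module.End K V) :
    finrank K (ker (f * g - 1)) ≤
      finrank K ↥(ker (f - 1) ⊓ ker (g - 1)) + finrank K ↥(range (f - 1) ⊓ range (g - 1)) := by
  set C := ker (f * g - 1)
  have hmap : C.map (g - 1) ≤ range (f - 1) ⊓ range (g - 1) := by
    rintro _ ⟨v, hv, rfl⟩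
    have hv : f (g v) = v := by simpa [C, sub_eq_zero] using hv
    refine ⟨⟨-g v, ?_⟩, mem_range_self _ v⟩
    simp [hv, neg_add_eq_sub]
  have hker : C ⊓ ker (g - 1) ≤ ker (f - 1) ⊓ ker (g - 1) := by
    rintro v ⟨hv, hgv⟩
    have hv : f (g v) = v := by simpa [C, sub_eq_zero] using hv
    have hgv : g v = v := by simpa [sub_eq_zero] using hgv
    exact ⟨by simpa [sub_eq_zero, hgv] using hv, by simpa [sub_eq_zero] using hgv⟩
  have hrn := ((g - 1).domRestrict C).finrank_range_add_finrank_ker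
  rw [range_domRestrict, ker_domRestrict, ← Submodule.finrank_map_subtype_eq,
    Submodule.map_comap_subtype] at hrn
  have := Submodule.finrank_mono hmap
  have := Submodule.finrank_mono hker
  omega

namespace Representation

variable {K G V : Type*} [CommRing K] [Group G] [AddCommGroup V] [Module K V]
  (ρ : Representation K G V) {S : Set G} {g : G}

theorem apply_eq_self_of_mem_closure {v : V} (hS : ∀ s ∈ S, ρ s v = v)
    (hg : g ∈ Subgroup.closure S) : ρ g v = v := by
  induction hg using Subgroup.closure_induction with
  | mem s hs => exact hS s hs
  | one => simp
  | mul a b _ _ ha hb => rw [map_mul, Module.End.mul_apply, hb, ha]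
  | inv a _ ha => simpa [ha] using ρ.inv_self_apply a v

theorem range_sub_one_le_of_mem_closure {W : Submodule K V} (hS : ∀ s ∈ S, range (ρ s - 1) ≤ W)
    (hg : g ∈ Subgroup.closure S) : range (ρ g - 1) ≤ W := by
  simp only [range_le_iff_comap, Submodule.eq_top_iff', Submodule.mem_comap,
    LinearMap.sub_apply, Module.End.one_apply] at hS ⊢
  induction hg using Subgroup.closure_induction with
  | mem s hs => exact hS s hs
  | one => simp
  | mul a b _ _ ha hb =>
    intro v
    rw [map_mul, Module.End.mul_apply, ← sub_add_sub_cancel _ (ρ b v)]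
    exact W.add_mem (ha _) (hb v)
  | inv a _ ha =>
    intro v
    simpa using W.neg_mem (ha (ρ a⁻¹ v))

end Representation

def permRep (K α : Type*) [CommSemiring K] : Representation K (Perm α) (α → K) where
  toFun σ := funLeft K K ⇑σ⁻¹
  map_one' := rfl
  map_mul' _ _ := rfl

namespace permRep

variable {K α : Type*}

@[simp]
theorem apply [CommSemiring K] (σ : Perm α) (v : α → K) (i : α) : permRep K α σ v i = v (σ⁻¹ i) := rfl

theorem single [CommSemiring K] [DecidableEq α] (σ : Perm α) (i : α) :
    permRep K α σ (Pi.single i 1) = Pi.single (σ i) 1 := by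
  ext j
  simp [Pi.single_apply, Equiv.symm_apply_eq]

variable [Field K]

theorem natCard_quotient_sameCycle_le_finrank_ker [Finite α] (σ : Perm α) :
    Nat.card (Quotient (SameCycle.setoid σ)) ≤ finrank K (ker (permRep K α σ - 1)) := by
  let q := Quotient.mk (SameCycle.setoid σ)
  have hle : range (funLeft K K q) ≤ ker (permRep K α σ - 1) := by
    rintro _ ⟨w, rfl⟩
    rw [mem_ker, LinearMap.sub_apply, Module.End.one_apply, sub_eq_zero]
    ext i
    exact congrArg w (Quotient.sound ⟨1, by simp⟩)
  have := Fintype.ofFinite (Quotient (SameCycle.setoid σ))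
  calc Nat.card (Quotient (SameCycle.setoid σ)) = finrank K (range (funLeft K K q)) := by
        rw [finrank_range_of_inj (funLeft_injective_of_surjective _ _ _ Quotient.mk_surjective),
          Module.finrank_fintype_fun_eq_card, Nat.card_eq_fintype_card]
    _ ≤ _ := Submodule.finrank_mono hle

theorem finrank_range_add_card_cycleType_le [Fintype α] [DecidableEq α] (σ : Perm α) :
    finrank K (range (permRep K α σ - 1)) + Multiset.card σ.cycleType ≤ σ.cycleType.sum := by
  have := (permRep K α σ - 1).finrank_range_add_finrank_ker
  have := natCard_quotient_sameCycle_le_finrank_ker (K := K) σ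
  have := σ.card_cycleType_add_le_natCard_quotient_sameCycle
  have := σ.sum_cycleType_le
  rw [Module.finrank_fintype_fun_eq_card] at *
  omega

section Transitive

variable [Nonempty α] {x y : Perm α}
  [MulAction.IsPretransitive (Subgroup.closure ({x, y} : Set (Perm α))) α]

theorem finrank_ker_inf_le_one :
    finrank K ↥(ker (permRep K α x - 1) ⊓ ker (permRep K α y - 1)) ≤ 1 := by
  obtain ⟨i₀⟩ := ‹Nonempty α›
  refine (Submodule.finrank_mono fun v hv => ?_).trans (finrank_span_singleton one_ne_zero).le
  have hfix (g : Subgroup.closure ({x, y} : Set (Perm α))) : permRep K α g v = v := by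
    refine (permRep K α).apply_eq_self_of_mem_closure ?_ g.2
    rintro s (rfl | rfl)
    exacts [by simpa [sub_eq_zero] using hv.1, by simpa [sub_eq_zero] using hv.2]
  refine Submodule.mem_span_singleton.mpr ⟨v i₀, funext fun j => ?_⟩
  obtain ⟨g, rfl⟩ := MulAction.exists_smul_eq (Subgroup.closure ({x, y} : Set (Perm α))) i₀ j
  simpa [Subgroup.smul_def, Perm.smul_def] using congrFun (hfix g) (g • i₀)

variable [Fintype α] [DecidableEq α]

theorem card_le_finrank_range_sup_add_one :
    Fintype.card α ≤ finrank K ↥(range (permRep K α x - 1) ⊔ range (permRep K α y - 1)) + 1 := by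
  obtain ⟨i₀⟩ := ‹Nonempty α›
  set W := range (permRep K α x - 1) ⊔ range (permRep K α y - 1)
  have hW (g : Subgroup.closure ({x, y} : Set (Perm α))) : range (permRep K α g - 1) ≤ W := by
    refine (permRep K α).range_sub_one_le_of_mem_closure ?_ g.2
    rintro s (rfl | rfl)
    exacts [le_sup_left, le_sup_right]
  have htop : ⊤ ≤ W ⊔ K ∙ Pi.single i₀ 1 := by
    rw [← (Pi.basisFun K α).span_eq, Submodule.span_le]
    rintro _ ⟨j, rfl⟩
    obtain ⟨g, rfl⟩ := MulAction.exists_smul_eq (Subgroup.closure ({x, y} : Set (Perm α))) i₀ j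
    have hdecomp : Pi.basisFun K α (g • i₀) =
        (permRep K α g - 1) (Pi.single i₀ 1) + Pi.single i₀ 1 := by
      rw [Pi.basisFun_apply, LinearMap.sub_apply, Module.End.one_apply, single, sub_add_cancel]
      simp only [Subgroup.smul_def, Perm.smul_def]
    rw [SetLike.mem_coe, hdecomp]
    exact Submodule.add_mem _ (Submodule.mem_sup_left (hW g (mem_range_self _ _)))
      (Submodule.mem_sup_right (Submodule.mem_span_singleton_self _))
  have hspan : finrank K (K ∙ (Pi.single i₀ 1 : α → K)) = 1 := finrank_span_singleton (by simp)
  have := Submodule.finrank_add_le_finrank_add_finrank W (K ∙ (Pi.single i₀ 1 : α → K))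
  have := Submodule.finrank_mono htop
  rw [finrank_top, Module.finrank_fintype_fun_eq_card] at this
  omega

theorem two_mul_card_le_finrank_range_add :
    2 * Fintype.card α ≤ finrank K (range (permRep K α x - 1)) +
      finrank K (range (permRep K α y - 1)) + finrank K (range (permRep K α (x * y) - 1)) + 2 := by
  have hscott := finrank_ker_mul_sub_one_le (permRep K α x) (permRep K α y)
  rw [← map_mul] at hscott
  have := (permRep K α (x * y) - 1).finrank_range_add_finrank_ker
  have := Submodule.finrank_sup_add_finrank_inf_eq (range (permRep K α x - 1))
    (range (permRep K α y - 1))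
  have := finrank_ker_inf_le_one (K := K) (x := x) (y := y)
  have := card_le_finrank_range_sup_add_one (K := K) (x := x) (y := y)
  rw [Module.finrank_fintype_fun_eq_card] at *
  omega

end Transitive

end permRep

namespace Equiv.Perm

variable {α : Type*} [Fintype α] [DecidableEq α]

theorem scott_inequality [Nonempty α] (x y : Perm α)
    [MulAction.IsPretransitive (Subgroup.closure ({x, y} : Set (Perm α))) α] :
    2 * Fintype.card α +
        (Multiset.card x.cycleType + Multiset.card y.cycleType + Multiset.card (x * y).cycleType) ≤
      x.cycleType.sum + y.cycleType.sum + (x * y).cycleType.sum + 2 := by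
  have := permRep.two_mul_card_le_finrank_range_add (K := ℚ) (x := x) (y := y)
  have := permRep.finrank_range_add_card_cycleType_le (K := ℚ) x
  have := permRep.finrank_range_add_card_cycleType_le (K := ℚ) y
  have := permRep.finrank_range_add_card_cycleType_le (K := ℚ) (x * y)
  omega

variable {σ : Perm α}

theorem even_sum_add_card_cycleType (h : σ ∈ alternatingGroup α) :
    Even (σ.cycleType.sum + Multiset.card σ.cycleType) := by
  have := sign_of_cycleType σ
  rw [mem_alternatingGroup.mp h] at this
  exact (neg_one_pow_eq_one_iff_even (by decide)).mp this.symm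

theorem dvd_of_mem_cycleType_of_pow_eq_one {m l : ℕ} (h : σ ^ m = 1) (hl : l ∈ σ.cycleType) :
    l ∣ m :=
  (dvd_of_mem_cycleType hl).trans (orderOf_dvd_of_pow_eq_one h)

theorem sum_cycleType_of_pow_prime_eq_one {p : ℕ} (hp : p.Prime) (h : σ ^ p = 1) :
    σ.cycleType.sum = p * Multiset.card σ.cycleType := by
  have := Fact.mk hp
  conv_lhs => rw [cycleType_of_pow_prime_eq_one h]
  rw [Multiset.sum_replicate, smul_eq_mul, mul_comm]

end Equiv.Perm

namespace Alt11

variable {σ : Perm (Fin 11)}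

theorem sum_cycleType_le_of_sq_eq_one (h : σ ^ 2 = 1) (hσ : σ ∈ alternatingGroup (Fin 11)) :
    σ.cycleType.sum ≤ Multiset.card σ.cycleType + 4 := by
  have := sum_cycleType_of_pow_prime_eq_one Nat.prime_two h
  have := σ.sum_cycleType_le
  obtain ⟨r, hr⟩ := even_sum_add_card_cycleType hσ
  simp only [Fintype.card_fin] at *
  omega

theorem sum_cycleType_le_of_pow_three_eq_one (h : σ ^ 3 = 1) :
    σ.cycleType.sum ≤ Multiset.card σ.cycleType + 6 := by
  have := sum_cycleType_of_pow_prime_eq_one Nat.prime_three h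
  have := σ.sum_cycleType_le
  simp only [Fintype.card_fin] at *
  omega

theorem sum_cycleType_le_of_pow_four_eq_one (h : σ ^ 4 = 1) :
    σ.cycleType.sum ≤ Multiset.card σ.cycleType + 7 := by
  have hle : σ.cycleType.sum ≤ Multiset.card σ.cycleType • 4 := Multiset.sum_le_card_nsmul _ _
    fun l hl => Nat.le_of_dvd (by norm_num) (dvd_of_mem_cycleType_of_pow_eq_one h hl)
  have heven := card_compl_support_modEq (p := 2) (n := 2) h
  rw [Finset.card_compl, ← sum_cycleType, Nat.ModEq] at heven
  have := σ.sum_cycleType_le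
  simp only [Fintype.card_fin, smul_eq_mul] at *
  omega

theorem sum_cycleType_le_of_pow_five_eq_one (h : σ ^ 5 = 1) :
    σ.cycleType.sum ≤ Multiset.card σ.cycleType + 8 := by
  have := sum_cycleType_of_pow_prime_eq_one Nat.prime_five h
  have := σ.sum_cycleType_le
  simp only [Fintype.card_fin] at *
  omega

theorem sum_cycleType_le_of_pow_eq_one_of_not_dvd {c : ℕ} (h : σ ^ c = 1) (hc : ¬ 11 ∣ c)
    (hσ : σ ∈ alternatingGroup (Fin 11)) : σ.cycleType.sum ≤ Multiset.card σ.cycleType + 8 := by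
  have hle : σ.cycleType.sum ≤ Multiset.card σ.cycleType • 10 := by
    refine Multiset.sum_le_card_nsmul _ _ fun l hl => ?_
    have := (le_card_support_of_mem_cycleType hl).trans (Finset.card_le_univ _)
    have : l ≠ 11 := fun h11 => hc (h11 ▸ dvd_of_mem_cycleType_of_pow_eq_one h hl)
    simp only [Fintype.card_fin] at *
    omega
  have := σ.sum_cycleType_le
  obtain ⟨r, hr⟩ := even_sum_add_card_cycleType hσ
  simp only [Fintype.card_fin, smul_eq_mul] at *
  omega

theorem not_altIsGenerated_of_sum_cycleType_lt {a b c : ℕ}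
    (h : ∀ x y : Perm (Fin 11), x ∈ alternatingGroup (Fin 11) → y ∈ alternatingGroup (Fin 11) →
      x ^ a = 1 → y ^ b = 1 → (x * y) ^ c = 1 →
      x.cycleType.sum + y.cycleType.sum + (x * y).cycleType.sum <
        Multiset.card x.cycleType + Multiset.card y.cycleType + Multiset.card (x * y).cycleType + 20) :
    ¬ AltIsGenerated 11 a b c := by
  rintro ⟨x, y, hx, hy, hxa, hyb, hxyc, hcl⟩
  have : MulAction.IsPretransitive (Subgroup.closure ({x, y} : Set (Perm (Fin 11)))) (Fin 11) :=
    hcl ▸ alternatingGroup.isPretransitive_of_three_le_card (Fin 11) (by simp)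
  have := scott_inequality x y
  have := h x y hx hy hxa hyb hxyc
  simp only [Fintype.card_fin] at *
  omega

end Alt11

/-- `Alt_11` is not `(2,3,c)`-generated for `c ≥ 7` with `11 ∤ c`, and not `(2,4,5)`- nor
`(3,3,4)`-generated. -/
theorem alt11_not_generated :
    (∀ c : ℕ, 7 ≤ c → ¬ (11 ∣ c) → ¬ AltIsGenerated 11 2 3 c) ∧
    ¬ AltIsGenerated 11 2 4 5 ∧
    ¬ AltIsGenerated 11 3 3 4 := by
  refine ⟨fun c _ hc => ?_, ?_, ?_⟩ <;>
    refine Alt11.not_altIsGenerated_of_sum_cycleType_lt fun x y hx hy hxa hyb hxyc => ?_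
  · have := Alt11.sum_cycleType_le_of_sq_eq_one hxa hx
    have := Alt11.sum_cycleType_le_of_pow_three_eq_one hyb
    have := Alt11.sum_cycleType_le_of_pow_eq_one_of_not_dvd hxyc hc (mul_mem hx hy)
    omega
  · have := Alt11.sum_cycleType_le_of_sq_eq_one hxa hx
    have := Alt11.sum_cycleType_le_of_pow_four_eq_one hyb
    have := Alt11.sum_cycleType_le_of_pow_five_eq_one hxyc
    omega
  · have := Alt11.sum_cycleType_le_of_pow_three_eq_one hxa
    have := Alt11.sum_cycleType_le_of_pow_three_eq_one hyb
    have := Alt11.sum_cycleType_le_of_pow_four_eq_one hxyc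
    omega
end

section
/- The alternating group Alt_19 is not (2,3,7)-generated: there do not exist permutations x, y ∈ Alt_19 with x² = y³ = (xy)⁷ = 1 which generate Alt_19; equivalently, Alt_19 is not a quotient of the triangle group T_{2,3,7}. -/
/-!
Scott's inequality: if `x * y * z = 1` and `⟨x, y⟩` is transitive on `n` points, then the numbers
of cycles satisfy `c(x) + c(y) + c(z) ≤ n + 2`. Write each of `x, y, z` as a product of `n - c`
transpositions; the concatenated word has product `1`, and transitivity makes the graph of its
transpositions connected. Multiplying a permutation by a transposition changes its number of
cycles by one (merging two cycles or splitting one), while adding an edge to a graph lowers its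
number of components by at most one, and only when it joins two components, in which case the
transposition merges two cycles. Hence `c(π) + n ≤ length + 2 · #components` along the word,
which for the full word reads `2n ≤ length + 2`.

For `n = 19`, an element of prime order `p` has only cycles of length `1` and `p`, so
`c(x) ≥ 10`, `c(y) ≥ 7` and `c((xy)⁻¹) ≥ 7`, contradicting `c(x) + c(y) + c(z) ≤ 21`.
-/

namespace Setoid

variable {α : Type*} {r s : Setoid α} {a b : α}

theorem card_quotient_le_of_le [Finite α] (h : r ≤ s) :
    Nat.card (Quotient s) ≤ Nat.card (Quotient r) :=
  Nat.card_le_card_of_surjective (map_of_le h) (Quotient.ind fun u => ⟨Quotient.mk r u, rfl⟩)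

theorem card_quotient_top_le_one [Finite α] : Nat.card (Quotient (⊤ : Setoid α)) ≤ 1 :=
  Finite.card_le_one_iff_subsingleton.mpr ⟨Quotient.ind₂ fun _ _ => Quotient.sound trivial⟩

open scoped Classical in
/-- The equivalence relation generated by `r` and the pair `(a, b)`: the class of `b` is
collapsed onto the class of `a`. -/
noncomputable def merge (r : Setoid α) (a b : α) : Setoid α :=
  ker fun u => if r u b then Quotient.mk r a else Quotient.mk r u

open scoped Classical in
theorem merge_rel_iff {u v : α} : r.merge a b u v ↔
    (if r u b then Quotient.mk r a else Quotient.mk r u) =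
      (if r v b then Quotient.mk r a else Quotient.mk r v) :=
  ker_def

theorem le_merge : r ≤ r.merge a b := by
  intro u v h
  rw [merge_rel_iff]
  by_cases hu : r u b
  · rw [if_pos hu, if_pos (r.trans (r.symm h) hu)]
  · rw [if_neg hu, if_neg fun hv => hu (r.trans h hv)]
    exact Quotient.sound h

theorem merge_rel : r.merge a b a b := by
  rw [merge_rel_iff, if_pos (r.refl b)]
  split_ifs <;> rfl

theorem merge_le (h : r ≤ s) (hab : s a b) : r.merge a b ≤ s := by
  intro u v huv
  rw [merge_rel_iff] at huv
  have hb : ∀ w, r w b → s a w := fun w hw => s.trans hab (s.symm (h hw))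
  split_ifs at huv with hu hv hv
  · exact s.trans (s.symm (hb u hu)) (hb v hv)
  · exact s.trans (s.symm (hb u hu)) (h (Quotient.exact huv))
  · exact s.trans (h (Quotient.exact huv)) (hb v hv)
  · exact h (Quotient.exact huv)

theorem merge_eq_self (h : r a b) : r.merge a b = r :=
  le_antisymm (merge_le le_rfl h) le_merge

theorem card_quotient_merge_add_one [Finite α] (h : ¬ r a b) :
    Nat.card (Quotient (r.merge a b)) + 1 = Nat.card (Quotient r) := by
  classical
  have hrange : Set.range (fun u => if r u b then Quotient.mk r a else Quotient.mk r u) =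
      {Quotient.mk r b}ᶜ := by
    ext q
    induction q using Quotient.ind with | _ v =>
    constructor
    · rintro ⟨u, hu⟩
      dsimp only at hu
      split_ifs at hu with hub
      · exact fun hab => h (Quotient.exact (hu.trans hab))
      · exact fun hb => hub (Quotient.exact (hu.trans hb))
    · intro hv
      exact ⟨v, if_neg fun hvb => hv (Quotient.sound hvb)⟩
  rw [merge, Nat.card_congr (quotientKerEquivRange _), hrange, Nat.card_coe_set_eq,
    Set.ncard_compl, Set.ncard_singleton]
  have : Nonempty (Quotient r) := ⟨Quotient.mk r b⟩
  exact Nat.sub_add_cancel Nat.card_pos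

def ofPairs (l : List (α × α)) : Setoid α := Relation.EqvGen.setoid fun u v => (u, v) ∈ l

theorem ofPairs_mono {l l' : List (α × α)} (h : l ⊆ l') : ofPairs l ≤ ofPairs l' :=
  eqvGen_le fun _ _ huv => Relation.EqvGen.rel _ _ (h huv)

theorem ofPairs_nil : ofPairs ([] : List (α × α)) = ⊥ :=
  le_antisymm (eqvGen_le fun _ _ h => absurd h List.not_mem_nil) bot_le

theorem ofPairs_cons (e : α × α) (l : List (α × α)) :
    ofPairs (e :: l) = (ofPairs l).merge e.1 e.2 := by
  refine le_antisymm (eqvGen_le fun u v h => ?_) ?_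
  · rcases List.mem_cons.mp h with rfl | h
    · exact merge_rel
    · exact le_merge (Relation.EqvGen.rel _ _ h)
  · refine merge_le (eqvGen_le fun u v h => ?_) (Relation.EqvGen.rel _ _ (by simp))
    exact Relation.EqvGen.rel _ _ (List.mem_cons_of_mem e h)

end Setoid

namespace Equiv.Perm

open Subgroup

variable {α : Type*} {σ : Perm α} {r : Setoid α} {a b : α}

/-- The number of cycles of `σ`, fixed points counted as cycles of length one. -/
noncomputable def numCycles (σ : Perm α) : ℕ := Nat.card (Quotient (SameCycle.setoid σ))

theorem sameCycle_setoid_one : SameCycle.setoid (1 : Perm α) = ⊥ :=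
  Setoid.ext fun _ _ => sameCycle_one

theorem numCycles_one : numCycles (1 : Perm α) = Nat.card α := by
  rw [numCycles, sameCycle_setoid_one, Nat.card_congr Setoid.quotientBotEquiv]

theorem sameCycle_setoid_eq_orbitRel :
    SameCycle.setoid σ = MulAction.orbitRel (zpowers σ) α := by
  ext u v
  rw [MulAction.orbitRel_apply, MulAction.mem_orbit_iff]
  refine sameCycle_comm.trans ⟨fun ⟨i, h⟩ => ⟨⟨σ ^ i, zpow_mem (mem_zpowers σ) i⟩, h⟩, ?_⟩
  rintro ⟨⟨g, hg⟩, h⟩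
  obtain ⟨i, rfl⟩ := mem_zpowers_iff.mp hg
  exact ⟨i, h⟩

open _root_.Finset in
theorem exists_numCycles_eq_of_pow_prime [Finite α] {p : ℕ} (hp : p.Prime) (hσ : σ ^ p = 1) :
    ∃ f k, numCycles σ = f + k ∧ Nat.card α = f + p * k := by
  classical
  have := Fintype.ofFinite α
  let period : MulAction.orbitRel.Quotient (zpowers σ) α → ℕ :=
    fun q => Function.minimalPeriod (σ • ·) q.out
  have hcard : Nat.card α = ∑ q, period q := by
    rw [Nat.card_congr (MulAction.selfEquivSigmaOrbits (zpowers σ) α), Nat.card_sigma]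
    exact sum_congr rfl fun q _ =>
      (Nat.card_congr (MulAction.orbitZPowersEquiv σ q.out)).trans (Nat.card_zmod _)
  have hperiod : ∀ q, period q = if period q = 1 then 1 else p := fun q => by
    have := hp.eq_one_or_self_of_dvd _
      (MulAction.pow_smul_eq_iff_minimalPeriod_dvd (b := q.out).mp (by rw [hσ, one_smul]))
    split_ifs with h <;> tauto
  refine ⟨#{q | period q = 1}, #{q | period q ≠ 1}, ?_, ?_⟩
  · rw [numCycles, sameCycle_setoid_eq_orbitRel, Nat.card_eq_fintype_card, ← card_univ,
      card_filter_add_card_filter_not]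
  · rw [hcard, sum_congr rfl fun q _ => hperiod q, sum_ite, sum_const, sum_const, smul_eq_mul,
      smul_eq_mul, mul_one, mul_comm]

theorem rel_apply_of_mem_closure {S : Set (Perm α)} (hS : ∀ g ∈ S, ∀ u, r u (g u))
    {g : Perm α} (hg : g ∈ closure S) (u : α) : r u (g u) := by
  induction hg using closure_induction generalizing u with
  | mem g hg => exact hS g hg u
  | one => exact r.refl u
  | mul g h _ _ hg hh => exact r.trans (hh u) (hg (h u))
  | inv g _ hg => simpa using r.symm (hg (g⁻¹ u))

theorem sameCycle_setoid_le (h : ∀ u, r u (σ u)) : SameCycle.setoid σ ≤ r := by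
  intro u v huv
  obtain ⟨i, rfl⟩ : σ.SameCycle u v := huv
  refine rel_apply_of_mem_closure (S := {σ}) ?_
    (zpow_mem (subset_closure (Set.mem_singleton σ)) i) u
  rintro g rfl
  exact h

variable [DecidableEq α]

theorem rel_swap_apply (hab : r a b) (u : α) : r u (swap a b u) := by
  rw [swap_apply_def]
  split_ifs with ha hb
  · exact ha ▸ hab
  · exact hb ▸ r.symm hab
  · exact r.refl u

theorem sameCycle_setoid_swap_mul_le (hσ : SameCycle.setoid σ ≤ r)
    (hab : r a b) : SameCycle.setoid (swap a b * σ) ≤ r :=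
  sameCycle_setoid_le fun u =>
    r.trans (hσ (sameCycle_apply_right.2 SameCycle.rfl)) (rel_swap_apply hab (σ u))

theorem sameCycle_swap_mul_of_not_sameCycle [Finite α]
    (h : ¬ σ.SameCycle a b) : (swap a b * σ).SameCycle b a := by
  -- `swap a b * σ` follows the `σ`-cycle of `b` until it returns to `b`, which it sends to `a`.
  have hret : ∃ m, 0 < m ∧ (σ ^ m) b = b :=
    ⟨orderOf σ, orderOf_pos σ, by rw [pow_orderOf_eq_one, one_apply]⟩
  let m := Nat.find hret
  have hm : 0 < m ∧ (σ ^ m) b = b := Nat.find_spec hret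
  have htraj : ∀ j, 1 ≤ j → j ≤ m → ((swap a b * σ) ^ j) b = swap a b ((σ ^ j) b) := by
    intro j hj
    induction j, hj using Nat.le_induction with
    | base => simp
    | succ j hj ih =>
      intro hjm
      have hja : (σ ^ j) b ≠ a := fun e => h (SameCycle.symm ⟨j, by simpa using e⟩)
      have hjb : (σ ^ j) b ≠ b := fun e => Nat.find_min hret (by omega) ⟨by omega, e⟩
      rw [pow_succ', mul_apply, ih (by omega), swap_apply_of_ne_of_ne hja hjb, pow_succ']
      rfl
  exact ⟨m, by rw [zpow_natCast, htraj m hm.1 le_rfl, hm.2, swap_apply_right]⟩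

theorem sameCycle_setoid_swap_mul [Finite α] (h : ¬ σ.SameCycle a b) :
    SameCycle.setoid (swap a b * σ) = (SameCycle.setoid σ).merge a b := by
  have hab : (swap a b * σ).SameCycle a b := (sameCycle_swap_mul_of_not_sameCycle h).symm
  refine le_antisymm (sameCycle_setoid_swap_mul_le Setoid.le_merge Setoid.merge_rel)
    (Setoid.merge_le ?_ hab)
  simpa only [swap_mul_self_mul] using sameCycle_setoid_swap_mul_le (σ := swap a b * σ) le_rfl hab

theorem numCycles_swap_mul_add_one [Finite α] (h : ¬ σ.SameCycle a b) :
    numCycles (swap a b * σ) + 1 = numCycles σ := by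
  rw [numCycles, sameCycle_setoid_swap_mul h]
  exact Setoid.card_quotient_merge_add_one h

theorem numCycles_swap_mul_le [Finite α] (σ : Perm α) (a b : α) :
    numCycles (swap a b * σ) ≤ numCycles σ + 1 := by
  by_cases h : (swap a b * σ).SameCycle a b
  · have hle : SameCycle.setoid σ ≤ SameCycle.setoid (swap a b * σ) := by
      simpa only [swap_mul_self_mul] using
        sameCycle_setoid_swap_mul_le (σ := swap a b * σ) le_rfl h
    exact (Setoid.card_quotient_le_of_le hle).trans (Nat.le_succ _)
  · have := numCycles_swap_mul_add_one h
    rw [swap_mul_self_mul] at this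
    omega

def prodSwaps (l : List (α × α)) : Perm α := (l.map fun e => swap e.1 e.2).prod

@[simp] theorem prodSwaps_nil : prodSwaps ([] : List (α × α)) = 1 := rfl

@[simp] theorem prodSwaps_cons (e : α × α) (l : List (α × α)) :
    prodSwaps (e :: l) = swap e.1 e.2 * prodSwaps l := by
  simp [prodSwaps]

@[simp] theorem prodSwaps_append (l l' : List (α × α)) :
    prodSwaps (l ++ l') = prodSwaps l * prodSwaps l' := by
  simp [prodSwaps]

theorem exists_prodSwaps_eq [Fintype α] (σ : Perm α) :
    ∃ l : List (α × α), prodSwaps l = σ ∧ l.length + numCycles σ = Nat.card α := by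
  induction h : σ.support.card using Nat.strong_induction_on generalizing σ with
  | _ n ih =>
  by_cases hσ : σ = 1
  · exact ⟨[], by simp [hσ], by simp [hσ, numCycles_one]⟩
  obtain ⟨x, hx⟩ : ∃ x, σ x ≠ x := not_forall.mp fun h => hσ (Equiv.ext h)
  set τ := swap x (σ x) * σ
  have hτx : τ x = x := by simp [τ]
  have hsplit : numCycles σ + 1 = numCycles τ := by
    have := numCycles_swap_mul_add_one (σ := τ) fun hs => hx (hs.eq_of_left hτx).symm
    rwa [swap_mul_self_mul] at this
  obtain ⟨l, hl, hlen⟩ := ih _ (h ▸ card_support_swap_mul hx) τ rfl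
  refine ⟨(x, σ x) :: l, by simp [hl, τ], ?_⟩
  rw [List.length_cons]
  omega

theorem sameCycle_setoid_prodSwaps_le (l : List (α × α)) :
    SameCycle.setoid (prodSwaps l) ≤ Setoid.ofPairs l := by
  induction l with
  | nil => exact sameCycle_setoid_one.trans_le bot_le
  | cons e l ih =>
    rw [prodSwaps_cons, Setoid.ofPairs_cons]
    exact sameCycle_setoid_swap_mul_le (ih.trans Setoid.le_merge) Setoid.merge_rel

theorem numCycles_prodSwaps_add_card_le [Finite α] (l : List (α × α)) :
    numCycles (prodSwaps l) + Nat.card α ≤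
      l.length + 2 * Nat.card (Quotient (Setoid.ofPairs l)) := by
  induction l with
  | nil =>
    rw [prodSwaps_nil, numCycles_one, Setoid.ofPairs_nil, Nat.card_congr Setoid.quotientBotEquiv,
      List.length_nil]
    omega
  | cons e l ih =>
    rw [prodSwaps_cons, Setoid.ofPairs_cons, List.length_cons]
    by_cases he : Setoid.ofPairs l e.1 e.2
    · rw [Setoid.merge_eq_self he]
      have := numCycles_swap_mul_le (prodSwaps l) e.1 e.2
      omega
    · have hπ : ¬ (prodSwaps l).SameCycle e.1 e.2 :=
        fun h => he (sameCycle_setoid_prodSwaps_le l h)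
      have h1 := numCycles_swap_mul_add_one hπ
      have h2 := Setoid.card_quotient_merge_add_one he
      omega

theorem numCycles_add_le_of_isPretransitive [Fintype α] {x y z : Perm α} (hxyz : x * y * z = 1)
    [MulAction.IsPretransitive (closure {x, y}) α] :
    numCycles x + numCycles y + numCycles z ≤ Nat.card α + 2 := by
  obtain ⟨lx, hlx, hx⟩ := exists_prodSwaps_eq x
  obtain ⟨ly, hly, hy⟩ := exists_prodSwaps_eq y
  obtain ⟨lz, hlz, hz⟩ := exists_prodSwaps_eq z
  set l := lx ++ ly ++ lz
  have hl : prodSwaps l = 1 := by rw [prodSwaps_append, prodSwaps_append, hlx, hly, hlz, hxyz]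
  have hgen : ∀ g ∈ ({x, y} : Set (Perm α)), ∀ u, Setoid.ofPairs l u (g u) := by
    rintro g (rfl | rfl) u
    · exact Setoid.ofPairs_mono (by simp [l]) <|
        sameCycle_setoid_prodSwaps_le lx (hlx ▸ sameCycle_apply_right.2 SameCycle.rfl)
    · exact Setoid.ofPairs_mono (by simp [l]) <|
        sameCycle_setoid_prodSwaps_le ly (hly ▸ sameCycle_apply_right.2 SameCycle.rfl)
  have hconn : Setoid.ofPairs l = ⊤ := by
    refine top_le_iff.mp fun u v _ => ?_
    obtain ⟨g, rfl⟩ := MulAction.exists_smul_eq (closure {x, y}) u v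
    exact rel_apply_of_mem_closure hgen g.2 u
  have hbound := numCycles_prodSwaps_add_card_le l
  rw [hl, numCycles_one, hconn] at hbound
  have := Setoid.card_quotient_top_le_one (α := α)
  simp only [l, List.length_append] at hbound
  omega

end Equiv.Perm

/-- `Alt_19` is not `(2,3,7)`-generated. -/
theorem alt19_not_237_generated : ¬ AltIsGenerated 19 2 3 7 := by
  rintro ⟨x, y, -, -, hx, hy, hxy, hgen⟩
  have : MulAction.IsPretransitive (Subgroup.closure {x, y}) (Fin 19) :=
    hgen ▸ alternatingGroup.isPretransitive_of_three_le_card (Fin 19) (by simp)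
  have hscott := Equiv.Perm.numCycles_add_le_of_isPretransitive (mul_inv_cancel (x * y))
  have hz : (x * y)⁻¹ ^ 7 = 1 := by rw [inv_pow, hxy, inv_one]
  obtain ⟨fx, kx, hcx, hnx⟩ := Equiv.Perm.exists_numCycles_eq_of_pow_prime Nat.prime_two hx
  obtain ⟨fy, ky, hcy, hny⟩ := Equiv.Perm.exists_numCycles_eq_of_pow_prime Nat.prime_three hy
  obtain ⟨fz, kz, hcz, hnz⟩ :=
    Equiv.Perm.exists_numCycles_eq_of_pow_prime (by norm_num : Nat.Prime 7) hz
  rw [Nat.card_fin] at hscott hnx hny hnz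
  omega
end
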